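/- arXiv:1002.1337 — 7 statements merged into one kernel-verified Lean document; each statement's English description precedes it below -/
import Mathlib

section
/- Let {X_m}_{m=1}^∞ be a sequence of complex-valued random variables on a common probability space, each having the same distribution, with E[X_1] = 0 and |X_m| ≤ B almost surely for some constant B > 0 (so in particular E[|X_1|^2] is finite). If the series Σ_{K≥1} (1/K^3) · E[|Σ_{m≤K} X_m|^2] converges, then the strong law of large numbers holds for {X_m}, i.e., (1/K) Σ_{m≤K} X_m → 0 almost surely as K → ∞. -/
/-! Summability of the `L¹` norms gives `∑ K⁻³ ‖S_K(ω)‖² < ∞` for almost every `ω`, where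
`S_K = X 1 + ⋯ + X K`. For such `ω` the increments of `S_K` are bounded by `B`, so
`‖S_K‖ ≥ εK` forces `‖S_J‖ ≥ εK/2` on the `≈ εK/(2B)` indices `J ∈ [K, K + εK/(2B)]`, all at
most `2K`. This block contributes at least `ε³/(64B)` to the series, which is impossible for
large `K` because the tails of a convergent series tend to zero. -/

open MeasureTheory Filter Topology

section Deterministic

variable {E : Type*} [SeminormedAddCommGroup E] {S : ℕ → E} {B ε : ℝ}

lemma norm_add_sub_le_of_norm_succ_sub_le (hS : ∀ K, ‖S (K + 1) - S K‖ ≤ B) (K d : ℕ) :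
    ‖S (d + K) - S K‖ ≤ d * B := by
  have h := dist_le_Ico_sum_of_dist_le (f := S) (d := fun _ => B) (Nat.le_add_left K d)
    fun _ _ => by rw [dist_eq_norm']; exact hS _
  simpa [dist_eq_norm'] using h

lemma div_le_norm_sq_div_cube (hS : ∀ K, ‖S (K + 1) - S K‖ ≤ B) (hB : 0 < B) (hε : 0 < ε)
    (hεB : ε ≤ B) {K d : ℕ} (hK : 0 < K) (hSK : ε * K ≤ ‖S K‖) (hd : d * B ≤ ε * K / 2) :
    ε ^ 2 / (32 * K) ≤ ‖S (d + K)‖ ^ 2 / ((d + K : ℕ) : ℝ) ^ 3 := by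
  have hK' : (0 : ℝ) < K := by exact_mod_cast hK
  have hdK : (d : ℝ) ≤ K := by nlinarith
  have hSdK : ε * K / 2 ≤ ‖S (d + K)‖ := by
    linarith [norm_le_insert' (S K) (S (d + K)), norm_add_sub_le_of_norm_succ_sub_le hS K d,
      norm_sub_rev (S K) (S (d + K))]
  calc ε ^ 2 / (32 * K) = (ε * K / 2) ^ 2 / (2 * K) ^ 3 := by field_simp; ring
    _ ≤ ‖S (d + K)‖ ^ 2 / ((d + K : ℕ) : ℝ) ^ 3 := by
      push_cast
      gcongr
      linarith

lemma le_sum_range_norm_sq_div_cube (hS : ∀ K, ‖S (K + 1) - S K‖ ≤ B) (hB : 0 < B)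
    (hε : 0 < ε) (hεB : ε ≤ B) {K : ℕ} (hK : 0 < K) (hSK : ε * K ≤ ‖S K‖) :
    ε ^ 3 / (64 * B) ≤ ∑ d ∈ Finset.range (⌊ε * K / (2 * B)⌋₊ + 1),
      ‖S (d + K)‖ ^ 2 / ((d + K : ℕ) : ℝ) ^ 3 := by
  set L := ⌊ε * K / (2 * B)⌋₊
  have hK' : (0 : ℝ) < K := by exact_mod_cast hK
  have hterm : ∀ d ∈ Finset.range (L + 1),
      ε ^ 2 / (32 * K) ≤ ‖S (d + K)‖ ^ 2 / ((d + K : ℕ) : ℝ) ^ 3 := by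
    intro d hd
    have hdL : (d : ℝ) ≤ ε * K / (2 * B) :=
      (Nat.cast_le.2 (Finset.mem_range_succ_iff.1 hd)).trans (Nat.floor_le (by positivity))
    refine div_le_norm_sq_div_cube hS hB hε hεB hK hSK ?_
    rw [le_div_iff₀ (by positivity)] at hdL
    linarith
  calc ε ^ 3 / (64 * B) = ε * K / (2 * B) * (ε ^ 2 / (32 * K)) := by field_simp; ring
    _ ≤ (L + 1 : ℕ) * (ε ^ 2 / (32 * K)) := by
      gcongr
      push_cast
      exact (Nat.lt_floor_add_one _).le
    _ ≤ _ := by simpa using Finset.card_nsmul_le_sum _ _ _ hterm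

lemma eventually_norm_lt_mul_of_summable (hS : ∀ K, ‖S (K + 1) - S K‖ ≤ B) (hB : 0 < B)
    (hε : 0 < ε) (hεB : ε ≤ B) (hsum : Summable fun K : ℕ => ‖S K‖ ^ 2 / (K : ℝ) ^ 3) :
    ∀ᶠ K : ℕ in atTop, ‖S K‖ < ε * K := by
  have htail := (tendsto_sum_nat_add fun K : ℕ => ‖S K‖ ^ 2 / (K : ℝ) ^ 3).eventually
    (gt_mem_nhds (show 0 < ε ^ 3 / (64 * B) by positivity))
  filter_upwards [htail, eventually_gt_atTop 0] with K hK hK0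
  by_contra! hSK
  have hblock := le_sum_range_norm_sq_div_cube hS hB hε hεB hK0 hSK
  have htail_le := ((summable_nat_add_iff K).2 hsum).sum_le_tsum
    (Finset.range (⌊ε * K / (2 * B)⌋₊ + 1)) fun _ _ => by positivity
  linarith

theorem tendsto_norm_div_of_summable (hS : ∀ K, ‖S (K + 1) - S K‖ ≤ B)
    (hsum : Summable fun K : ℕ => ‖S K‖ ^ 2 / (K : ℝ) ^ 3) :
    Tendsto (fun K : ℕ => ‖S K‖ / K) atTop (𝓝 0) := by
  have hS' : ∀ K, ‖S (K + 1) - S K‖ ≤ max B 1 := fun K => (hS K).trans (le_max_left _ _)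
  refine tendsto_order.2 ⟨fun a ha => Eventually.of_forall fun K => ha.trans_le (by positivity),
    fun ε hε => ?_⟩
  filter_upwards [eventually_norm_lt_mul_of_summable hS' (by positivity) (lt_min hε one_pos)
    ((min_le_right _ _).trans (le_max_right B 1)) hsum, eventually_gt_atTop 0] with K hK hK0
  rw [div_lt_iff₀ (by exact_mod_cast hK0)]
  exact hK.trans_le (by gcongr; exact min_le_left _ _)

end Deterministic

lemma ae_summable_norm_of_summable_integral_norm {α E : Type*} [MeasurableSpace α]
    {μ : Measure α} [NormedAddCommGroup E] {f : ℕ → α → E} (hf : ∀ n, Integrable (f n) μ)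
    (hsum : Summable fun n => ∫ a, ‖f n a‖ ∂μ) :
    ∀ᵐ a ∂μ, Summable fun n => ‖f n a‖ := by
  refine summable_norm_of_tsum_eLpNorm_ne_top le_rfl (fun n => (hf n).1) ?_
  simp_rw [eLpNorm_one_eq_lintegral_enorm, ← ofReal_integral_norm_eq_lintegral_enorm (hf _),
    ← ENNReal.ofReal_tsum_of_nonneg (fun n => integral_nonneg fun _ => norm_nonneg _) hsum]
  exact ENNReal.ofReal_ne_top

theorem sln_of_identDistrib_of_summable_general
    {Ω : Type*} [MeasurableSpace Ω] (μ : Measure Ω) [IsProbabilityMeasure μ]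
    (X : ℕ → Ω → ℂ) (B : ℝ)
    (hmeas : ∀ m, AEStronglyMeasurable (X m) μ)
    (hbdd : ∀ m, ∀ᵐ ω ∂μ, ‖X m ω‖ ≤ B)
    (hsum : Summable fun K : ℕ =>
      (1 / (K : ℝ) ^ 3) * ∫ ω, ‖∑ m ∈ Finset.Icc 1 K, X m ω‖ ^ 2 ∂μ) :
    ∀ᵐ ω ∂μ, Tendsto (fun K : ℕ => (K : ℂ)⁻¹ * ∑ m ∈ Finset.Icc 1 K, X m ω)
      atTop (nhds 0) := by
  set S : ℕ → Ω → ℂ := fun K ω => ∑ m ∈ Finset.Icc 1 K, X m ω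
  have hbdd_all : ∀ᵐ ω ∂μ, ∀ m, ‖X m ω‖ ≤ B := ae_all_iff.2 hbdd
  have hS_succ : ∀ K ω, S (K + 1) ω - S K ω = X (K + 1) ω := fun K ω => by
    simp only [S, Finset.sum_Icc_succ_top (Nat.le_add_left 1 K), add_sub_cancel_left]
  have hint : ∀ K : ℕ, Integrable (fun ω => ‖S K ω‖ ^ 2 / (K : ℝ) ^ 3) μ := by
    intro K
    refine Integrable.of_bound (by fun_prop) ((K * B) ^ 2 / (K : ℝ) ^ 3) ?_
    filter_upwards [hbdd_all] with ω hω
    have hSK : ‖S K ω‖ ≤ K * B := by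
      simpa using norm_sum_le_of_le (Finset.Icc 1 K) fun m _ => hω m
    rw [Real.norm_of_nonneg (by positivity)]
    gcongr
  have hsum' : Summable fun K : ℕ => ∫ ω, ‖‖S K ω‖ ^ 2 / (K : ℝ) ^ 3‖ ∂μ := by
    simpa [integral_const_mul, div_eq_inv_mul] using hsum
  filter_upwards [ae_summable_norm_of_summable_integral_norm hint hsum', hbdd_all]
    with ω hω hωB
  have h := tendsto_norm_div_of_summable (S := fun K => S K ω) (fun K => hS_succ K ω ▸ hωB _)
    (by simpa using hω)
  refine tendsto_zero_iff_norm_tendsto_zero.2 (h.congr fun K => ?_)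
  simp [S, div_eq_inv_mul]

/-- **A strong law of large numbers for identically distributed (not necessarily
independent) bounded complex random variables.**  If `X 1, X 2, ...` are identically
distributed complex random variables with `E[X 1] = 0`, `|X m| ≤ B` almost surely,
and `Σ_{K ≥ 1} K⁻³ E[|Σ_{m ≤ K} X m|²] < ∞`, then `K⁻¹ Σ_{m ≤ K} X m → 0`
almost surely. -/
theorem sln_of_identDistrib_of_summable
    {Ω : Type*} [MeasurableSpace Ω] (μ : Measure Ω) [IsProbabilityMeasure μ]
    (X : ℕ → Ω → ℂ) (B : ℝ) (hB : 0 < B)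
    (hmeas : ∀ m, AEStronglyMeasurable (X m) μ)
    (hident : ∀ m, ProbabilityTheory.IdentDistrib (X m) (X 1) μ μ)
    (hmean : ∫ ω, X 1 ω ∂μ = 0)
    (hbdd : ∀ m, ∀ᵐ ω ∂μ, ‖X m ω‖ ≤ B)
    (hsum : Summable fun K : ℕ =>
      (1 / (K : ℝ) ^ 3) * ∫ ω, ‖∑ m ∈ Finset.Icc 1 K, X m ω‖ ^ 2 ∂μ) :
    ∀ᵐ ω ∂μ, Tendsto (fun K : ℕ => (K : ℂ)⁻¹ * ∑ m ∈ Finset.Icc 1 K, X m ω)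
      atTop (nhds 0) :=
  sln_of_identDistrib_of_summable_general μ X B hmeas hbdd hsum
end

section
/- Let g : ℝ → ℝ be a measurable function that is periodic with period p > 0, satisfies g(x) = −g(x + p/2) for all x ∈ ℝ, and satisfies |g(x)| ≤ 1 for all x. Let h : ℝ → ℝ be a nonnegative Lebesgue-integrable function. Let a < b be reals with b − a ≥ p/(2|c_1|), let c_1 ≠ 0 and c_2 be real constants, and suppose there is a finite partition a = x_0 < x_1 < ... < x_m = b such that h is monotone on each interval [x_{i−1}, x_i] for i = 1, ..., m. Suppose x̃ ∈ ℝ is such that ∫_{x̃}^{x̃ + p/(2|c_1|)} h(x) dx ≥ ∫_{x}^{x + p/(2|c_1|)} h(x) dx for all x ∈ [a, b − p/(2|c_1|)]. Then |∫_a^b g(c_1 x + c_2) h(x) dx| ≤ m · ∫_{x̃}^{x̃ + p/(2|c_1|)} h(x) dx. -/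
/-!
With `L = p / (2|c₁|)`, the function `G t = g (c₁ t + c₂)` is antiperiodic with antiperiod `L`.
If `h ≥ 0` is nondecreasing, antiperiodicity turns `∫ G h` over two adjacent windows of length `L`
into `∫ G (h - h (· + L))` over the first one, which is at most the increase of the window
integrals of `h`. Peeling such pairs off from the right end, these increases telescope, so the
whole integral is bounded by `∫ h` over the last window of length `L` inside the piece.
Nonincreasing pieces are handled by reflection, every such window lies in a window `[y, y + L]`
with `y ∈ [a, b - L]`, and the `m` pieces add up.
-/

open MeasureTheory intervalIntegral Function Set

theorem Function.Antiperiodic.abs {R M : Type*} [AddCommGroup R] [LinearOrder R]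
    [InvolutiveNeg M] {f : R → M} {c : R} (hf : Antiperiodic f c) :
    Antiperiodic f |c| := by
  rcases abs_choice c with hc | hc <;> rw [hc]
  exacts [hf, hf.neg]

lemma le_of_forall_le_succ {α : Type*} [Preorder α] {x : ℕ → α} {m : ℕ}
    (hx : ∀ i < m, x i ≤ x (i + 1)) {i j : ℕ}
    (hij : i ≤ j) (hjm : j ≤ m) : x i ≤ x j := by
  induction j, hij using Nat.le_induction with
  | base => rfl
  | succ j _ ih => exact (ih (by omega)).trans (hx j (by omega))

lemma abs_integral_le_mul_of_abs_integral_le {f : ℝ → ℝ} {x : ℕ → ℝ} {m : ℕ} {M : ℝ}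
    (hf : ∀ i < m, IntervalIntegrable f volume (x i) (x (i + 1)))
    (hM : ∀ i < m, |∫ t in x i..x (i + 1), f t| ≤ M) :
    |∫ t in x 0..x m, f t| ≤ m * M := by
  rw [← sum_integral_adjacent_intervals hf]
  calc |∑ i ∈ Finset.range m, ∫ t in x i..x (i + 1), f t|
      ≤ ∑ i ∈ Finset.range m, |∫ t in x i..x (i + 1), f t| := Finset.abs_sum_le_sum_abs _ _
    _ ≤ ∑ _i ∈ Finset.range m, M := Finset.sum_le_sum fun i hi ↦ hM i (Finset.mem_range.mp hi)
    _ = m * M := by rw [Finset.sum_const, Finset.card_range, nsmul_eq_mul]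

lemma MeasureTheory.Integrable.mul_of_abs_le_one {X : Type*} [MeasurableSpace X] {μ : Measure X}
    {G f : X → ℝ} (hGm : Measurable G) (hGb : ∀ t, |G t| ≤ 1) (hf : Integrable f μ) :
    Integrable (fun t ↦ G t * f t) μ :=
  hf.bdd_mul hGm.aestronglyMeasurable (ae_of_all _ hGb)

section

variable {G f h k : ℝ → ℝ} {L M a b c u v α β : ℝ}

lemma abs_integral_mul_le_of_abs_le_one (hGb : ∀ t, |G t| ≤ 1) (huv : u ≤ v)
    (hfk : ∀ t ∈ Ioc u v, |f t| ≤ k t) (hk : IntervalIntegrable k volume u v) :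
    |∫ t in u..v, G t * f t| ≤ ∫ t in u..v, k t :=
  norm_integral_le_of_norm_le huv (ae_of_all _ fun t ht ↦ by
    rw [Real.norm_eq_abs, abs_mul]
    exact (mul_le_of_le_one_left (abs_nonneg _) (hGb t)).trans (hfk t ht)) hk

lemma integral_le_integral_comp_add_of_monotoneOn (hL : 0 ≤ L) (huv : u ≤ v)
    (hmono : MonotoneOn h (Icc u (v + L))) (hh : Integrable h) :
    ∫ t in u..v, h t ≤ ∫ t in u + L..v + L, h t := by
  rw [← integral_comp_add_right]
  refine integral_mono_on huv hh.intervalIntegrable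
    (hh.comp_add_right L).intervalIntegrable fun t ht ↦ hmono ?_ ?_ (by linarith)
  · exact ⟨ht.1, by linarith [ht.2]⟩
  · exact ⟨by linarith [ht.1], by linarith [ht.2]⟩

lemma integral_indicator_Ioc (hcβ : c ≤ β) (hαβ : α ≤ β) :
    ∫ t in c..β, (Ioc α β).indicator f t = ∫ t in max c α..β, f t := by
  rw [integral_of_le hcβ, integral_of_le (max_le hcβ hαβ), setIntegral_indicator measurableSet_Ioc,
    Ioc_inter_Ioc, min_self]

lemma abs_integral_mul_le_sub_of_antiperiodic (hG : Antiperiodic G L) (hGm : Measurable G)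
    (hGb : ∀ t, |G t| ≤ 1) (hL : 0 ≤ L) (hh : Integrable h)
    (hmono : MonotoneOn h (Icc (β - 2 * L) β)) :
    |∫ t in β - 2 * L..β, G t * h t| ≤ (∫ t in β - L..β, h t) - ∫ t in β - 2 * L..β - L, h t := by
  have hGh := hh.mul_of_abs_le_one hGm hGb
  have hGh' := (hh.comp_add_right L).mul_of_abs_le_one hGm hGb
  have hshift : β - 2 * L + L = β - L ∧ β - L + L = β := by constructor <;> ring
  have hcomp : ∀ φ : ℝ → ℝ, ∫ t in β - 2 * L..β - L, φ (t + L) = ∫ t in β - L..β, φ t := fun φ ↦ by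
    rw [integral_comp_add_right, hshift.1, hshift.2]
  have hfold : ∫ t in β - L..β, G t * h t = -∫ t in β - 2 * L..β - L, G t * h (t + L) := by
    rw [← hcomp, ← intervalIntegral.integral_neg]
    simp only [hG _, neg_mul]
  have hsplit : ∫ t in β - 2 * L..β, G t * h t =
      ∫ t in β - 2 * L..β - L, G t * (h t - h (t + L)) := by
    rw [← integral_add_adjacent_intervals (b := β - L) hGh.intervalIntegrable
      hGh.intervalIntegrable, hfold, ← sub_eq_add_neg, ← integral_sub hGh.intervalIntegrable
      hGh'.intervalIntegrable]
    simp only [mul_sub]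
  have hL2 : β - 2 * L ≤ β - L := by linarith
  rw [hsplit, ← hcomp, ← integral_sub (hh.comp_add_right L).intervalIntegrable
    hh.intervalIntegrable]
  refine abs_integral_mul_le_of_abs_le_one hGb hL2 (fun t ht ↦ ?_)
    ((hh.comp_add_right L).sub hh).intervalIntegrable
  rw [abs_sub_comm, abs_of_nonneg (sub_nonneg.2 (hmono ?_ ?_ (by linarith)))]
  · exact ⟨ht.1.le, by linarith [ht.2]⟩
  · exact ⟨by linarith [ht.1], by linarith [ht.2]⟩

lemma abs_integral_mul_le_of_monotoneOn_Iic (hG : Antiperiodic G L) (hGm : Measurable G)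
    (hGb : ∀ t, |G t| ≤ 1) (hL : 0 ≤ L) (hh0 : ∀ t, 0 ≤ h t) (hh : Integrable h) (n : ℕ)
    (hmono : MonotoneOn h (Iic β)) :
    |∫ t in β - n * L..β, G t * h t| ≤ ∫ t in β - L..β, h t := by
  induction n using Nat.twoStepInduction generalizing β with
  | zero =>
    simpa using integral_nonneg (by linarith) fun t _ ↦ hh0 t
  | one =>
    simpa using abs_integral_mul_le_of_abs_le_one hGb (by linarith)
      (fun t _ ↦ (abs_of_nonneg (hh0 t)).le) hh.intervalIntegrable
  | more n ih _ =>
    have hsub : β - 2 * L ≤ β := by linarith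
    have hpair := abs_integral_mul_le_sub_of_antiperiodic hG hGm hGb hL hh
      (hmono.mono fun t ht ↦ ht.2)
    have hind := ih (β := β - 2 * L) (hmono.mono (Iic_subset_Iic.2 hsub))
    have hprev := integral_le_integral_comp_add_of_monotoneOn (u := β - 2 * L - L)
      (v := β - 2 * L) hL (by linarith) (hmono.mono fun t ht ↦ ht.2.trans (by linarith)) hh
    rw [show β - 2 * L - L + L = β - 2 * L by ring, show β - 2 * L + L = β - L by ring] at hprev
    have hGh := hh.mul_of_abs_le_one hGm hGb
    rw [← integral_add_adjacent_intervals (b := β - 2 * L) hGh.intervalIntegrable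
      hGh.intervalIntegrable,
      show β - ↑(n + 2) * L = β - 2 * L - n * L by push_cast; ring]
    linarith [abs_add_le (∫ t in β - 2 * L - n * L..β - 2 * L, G t * h t)
      (∫ t in β - 2 * L..β, G t * h t)]

lemma monotoneOn_Iic_indicator_Ioc (hh0 : ∀ t, 0 ≤ h t) (hmono : MonotoneOn h (Icc α β)) :
    MonotoneOn ((Ioc α β).indicator h) (Iic β) := by
  intro s _ t ht hst
  by_cases hsα : s ≤ α
  · rw [indicator_of_notMem fun hs ↦ (not_lt.2 hsα) hs.1]
    exact indicator_nonneg (fun t _ ↦ hh0 t) t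
  · have hs : s ∈ Ioc α β := ⟨not_le.1 hsα, hst.trans ht⟩
    have ht' : t ∈ Ioc α β := ⟨hs.1.trans_le hst, ht⟩
    rw [indicator_of_mem hs, indicator_of_mem ht']
    exact hmono (Ioc_subset_Icc_self hs) (Ioc_subset_Icc_self ht') hst

lemma exists_window_of_monotoneOn (hG : Antiperiodic G L) (hGm : Measurable G)
    (hGb : ∀ t, |G t| ≤ 1) (hL : 0 < L) (hh0 : ∀ t, 0 ≤ h t) (hh : Integrable h) (hαβ : α ≤ β)
    (hmono : MonotoneOn h (Icc α β)) :
    ∃ u v, α ≤ u ∧ u ≤ v ∧ v ≤ β ∧ v - u ≤ L ∧ |∫ t in α..β, G t * h t| ≤ ∫ t in u..v, h t := by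
  obtain ⟨n, hn⟩ := exists_nat_ge ((β - α) / L)
  have hnα : β - n * L ≤ α := by rw [div_le_iff₀ hL] at hn; linarith
  -- cutting `h` off at `α` keeps it monotone on a whole half-line
  have hcut := abs_integral_mul_le_of_monotoneOn_Iic hG hGm hGb hL.le
    (indicator_nonneg fun t _ ↦ hh0 t) (hh.indicator measurableSet_Ioc) n
    (monotoneOn_Iic_indicator_Ioc hh0 hmono)
  simp only [← indicator_mul_right] at hcut
  rw [integral_indicator_Ioc (by linarith) hαβ, integral_indicator_Ioc (by linarith) hαβ,
    max_eq_right hnα] at hcut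
  exact ⟨max (β - L) α, β, le_max_right _ _, max_le (by linarith) hαβ, le_rfl,
    by linarith [le_max_left (β - L) α], hcut⟩

lemma exists_window_of_antitoneOn (hG : Antiperiodic G L) (hGm : Measurable G)
    (hGb : ∀ t, |G t| ≤ 1) (hL : 0 < L) (hh0 : ∀ t, 0 ≤ h t) (hh : Integrable h) (hαβ : α ≤ β)
    (hanti : AntitoneOn h (Icc α β)) :
    ∃ u v, α ≤ u ∧ u ≤ v ∧ v ≤ β ∧ v - u ≤ L ∧ |∫ t in α..β, G t * h t| ≤ ∫ t in u..v, h t := by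
  have hrefl : ∀ t ∈ Icc α β, α + β - t ∈ Icc α β := fun t ht ↦
    ⟨by linarith [ht.2], by linarith [ht.1]⟩
  obtain ⟨u, v, hu, huv, hv, hvu, hbound⟩ := exists_window_of_monotoneOn (hG.const_sub (α + β))
    (hGm.comp (measurable_const.sub measurable_id)) (fun t ↦ hGb _) hL (fun t ↦ hh0 _)
    (hh.comp_sub_left (α + β)) hαβ
    (fun s hs t ht hst ↦ hanti (hrefl t ht) (hrefl s hs) (by linarith))
  refine ⟨α + β - v, α + β - u, by linarith, by linarith, by linarith, by linarith, ?_⟩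
  rwa [integral_comp_sub_left (fun t ↦ G t * h t), integral_comp_sub_left h,
    add_sub_cancel_right, add_sub_cancel_left] at hbound

lemma integral_le_of_forall_window_le (hh0 : ∀ t, 0 ≤ h t) (hh : Integrable h)
    (hab : a ≤ b - L) (hmax : ∀ y ∈ Icc a (b - L), ∫ t in y..y + L, h t ≤ M)
    (hau : a ≤ u) (huv : u ≤ v) (hvb : v ≤ b) (hvu : v - u ≤ L) :
    ∫ t in u..v, h t ≤ M := by
  have hvy : v ≤ min u (b - L) + L := by
    rw [← min_add_add_right]; exact le_min (by linarith) (by linarith)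
  exact (integral_mono_interval (min_le_left _ _) huv hvy (ae_of_all _ fun t ↦ hh0 t)
    hh.intervalIntegrable).trans (hmax _ ⟨le_min hau hab, min_le_right _ _⟩)

end

theorem abs_integral_mul_le_of_piecewise_monotone_general
    (g h : ℝ → ℝ) (p : ℝ) (hp : 0 < p)
    (hgmeas : Measurable g)
    (hganti : ∀ y, g y = -g (y + p / 2))
    (hgbdd : ∀ y, |g y| ≤ 1)
    (hh : ∀ y, 0 ≤ h y) (hhint : Integrable h)
    (c₁ c₂ : ℝ) (hc₁ : c₁ ≠ 0)
    (a b : ℝ) (hlen : p / (2 * |c₁|) ≤ b - a)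
    (m : ℕ) (x : ℕ → ℝ) (hx0 : x 0 = a) (hxm : x m = b)
    (hxlt : ∀ i < m, x i < x (i + 1))
    (hmono : ∀ i < m,
      MonotoneOn h (Set.Icc (x i) (x (i + 1))) ∨ AntitoneOn h (Set.Icc (x i) (x (i + 1))))
    (xt : ℝ)
    (hmax : ∀ y ∈ Set.Icc a (b - p / (2 * |c₁|)),
      (∫ t in y..(y + p / (2 * |c₁|)), h t) ≤ ∫ t in xt..(xt + p / (2 * |c₁|)), h t) :
    |∫ t in a..b, g (c₁ * t + c₂) * h t| ≤
      m * ∫ t in xt..(xt + p / (2 * |c₁|)), h t := by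
  have hL : 0 < p / (2 * |c₁|) := by positivity
  have hG : Antiperiodic (fun t ↦ g (c₁ * t + c₂)) (p / (2 * |c₁|)) := by
    have hg : Antiperiodic g (p / 2) := fun y ↦ by linarith [hganti y]
    have hL' : |c₁⁻¹ * (p / 2)| = p / (2 * |c₁|) := by
      rw [abs_mul, abs_inv, abs_of_pos (half_pos hp)]
      ring
    simpa only [hL'] using ((hg.add_const c₂).const_mul hc₁).abs
  have hGm : Measurable fun t ↦ g (c₁ * t + c₂) := by fun_prop
  have hGb : ∀ t, |g (c₁ * t + c₂)| ≤ 1 := fun t ↦ hgbdd _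
  have hx : ∀ i < m, x i ≤ x (i + 1) := fun i hi ↦ (hxlt i hi).le
  subst hx0 hxm
  refine abs_integral_le_mul_of_abs_integral_le
    (fun i _ ↦ (hhint.mul_of_abs_le_one hGm hGb).intervalIntegrable) fun i hi ↦ ?_
  have hαβ := hx i hi
  obtain ⟨u, v, hu, huv, hv, hvu, hbound⟩ := (hmono i hi).elim
    (exists_window_of_monotoneOn hG hGm hGb hL hh hhint hαβ)
    (exists_window_of_antitoneOn hG hGm hGb hL hh hhint hαβ)
  exact hbound.trans (integral_le_of_forall_window_le hh hhint (by linarith) hmax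
    ((le_of_forall_le_succ hx (Nat.zero_le i) hi.le).trans hu) huv
    (hv.trans (le_of_forall_le_succ hx hi le_rfl)) hvu)

/-- If `g` is periodic with period `p > 0`, antiperiodic with antiperiod `p/2`, and
bounded by `1`, `h` is a nonnegative integrable function that is piecewise monotone on
`[a, b]` with respect to a partition `a = x 0 < x 1 < ... < x m = b`, and `xt` maximizes
`x ↦ ∫_{x}^{x + p/(2|c₁|)} h` over `x ∈ [a, b - p/(2|c₁|)]`, then
`|∫_a^b g (c₁ x + c₂) h x dx| ≤ m ∫_{xt}^{xt + p/(2|c₁|)} h x dx`. -/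
theorem abs_integral_mul_le_of_piecewise_monotone
    (g h : ℝ → ℝ) (p : ℝ) (hp : 0 < p)
    (hgmeas : Measurable g)
    (hgper : Function.Periodic g p)
    (hganti : ∀ y, g y = -g (y + p / 2))
    (hgbdd : ∀ y, |g y| ≤ 1)
    (hh : ∀ y, 0 ≤ h y) (hhint : Integrable h)
    (c₁ c₂ : ℝ) (hc₁ : c₁ ≠ 0)
    (a b : ℝ) (hab : a < b) (hlen : p / (2 * |c₁|) ≤ b - a)
    (m : ℕ) (x : ℕ → ℝ) (hx0 : x 0 = a) (hxm : x m = b)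
    (hxlt : ∀ i < m, x i < x (i + 1))
    (hmono : ∀ i < m,
      MonotoneOn h (Set.Icc (x i) (x (i + 1))) ∨ AntitoneOn h (Set.Icc (x i) (x (i + 1))))
    (xt : ℝ)
    (hmax : ∀ y ∈ Set.Icc a (b - p / (2 * |c₁|)),
      (∫ t in y..(y + p / (2 * |c₁|)), h t) ≤ ∫ t in xt..(xt + p / (2 * |c₁|)), h t) :
    |∫ t in a..b, g (c₁ * t + c₂) * h t| ≤
      m * ∫ t in xt..(xt + p / (2 * |c₁|)), h t :=
  abs_integral_mul_le_of_piecewise_monotone_general g h p hp hgmeas hganti hgbdd hh hhint c₁ c₂ hc₁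
    a b hlen m x hx0 hxm hxlt hmono xt hmax
end

section
/- Let g : ℝ → ℝ be a measurable function that is periodic with period p > 0, satisfies g(x) = −g(x + p/2) for all x ∈ ℝ, and satisfies |g(x)| ≤ 1 for all x. Let h : ℝ → ℝ be a nonnegative Lebesgue-integrable function, let c_1 ≠ 0 and c_2 be real constants, and let [a_1, b_1] be an interval on which h is monotonically increasing. Then |∫_{a_1}^{b_1} g(c_1 x + c_2) h(x) dx| ≤ ∫_{b_1 − p/(2|c_1|)}^{b_1} h(x) dx. -/
/-!
With `T = p / (2|c₁|)`, the function `φ x = g (c₁ x + c₂)` is antiperiodic with antiperiod `T`.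
Cut an interval `[b₁ - nT, b₁] ⊇ [a₁, b₁]` into blocks of length `T` and translate each block onto
the last one: the integral becomes `∫_{b₁-T}^{b₁} φ A`, where
`A x = ∑ₖ (-1)ᵏ v (x - kT)` and `v` is `h` cut off outside `(a₁, b₁]`. Since `v` is nonnegative
and monotone on `(-∞, b₁]`, `A x` is an alternating sum of a nonincreasing nonnegative sequence,
so `0 ≤ A x ≤ h x`, and `|φ| ≤ 1` finishes the estimate.
-/

open MeasureTheory intervalIntegral Set Function

theorem alternating_sum_mem_Icc_of_antitone {u : ℕ → ℝ} (hu : Antitone u) (hu₀ : ∀ k, 0 ≤ u k)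
    (n : ℕ) : ∑ k ∈ Finset.range n, (-1) ^ k * u k ∈ Icc 0 (u 0) := by
  induction n generalizing u with
  | zero => simpa using hu₀ 0
  | succ n ih =>
    have hshift := ih (u := fun k => u (k + 1)) (fun i j hij => hu (by omega)) (fun k => hu₀ _)
    have hu₁ : u 1 ≤ u 0 := hu zero_le_one
    rw [Finset.sum_range_succ']
    simp only [pow_succ, mul_neg_one, neg_mul, Finset.sum_neg_distrib, pow_zero, one_mul,
      mem_Icc] at hshift ⊢
    constructor <;> linarith [hshift.1, hshift.2]

theorem Function.Antiperiodic.comp_mul_add {g : ℝ → ℝ} {c : ℝ} (hg : Antiperiodic g c)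
    {a : ℝ} (ha : a ≠ 0) (d : ℝ) : Antiperiodic (fun x => g (a * x + d)) (c / |a|) := by
  rcases abs_choice a with h | h <;> rw [h]
  · simpa [div_eq_inv_mul] using (hg.add_const d).const_mul ha
  · simpa [div_eq_inv_mul] using (hg.neg.add_const d).const_mul ha

theorem Function.Antiperiodic.intervalIntegral_mul_eq_alternating_sum {φ f : ℝ → ℝ} {T : ℝ}
    (hφ : Antiperiodic φ T) (hT : 0 ≤ T) (b : ℝ) (n : ℕ)
    (hint : IntervalIntegrable (fun x => φ x * f x) volume (b - n * T) b) :
    ∫ x in (b - n * T)..b, φ x * f x =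
      ∫ x in (b - T)..b, φ x * ∑ k ∈ Finset.range n, (-1) ^ k * f (x - k * T) := by
  have hpiece : ∀ k < n,
      IntervalIntegrable (fun x => φ x * f x) volume (b - k * T) (b - (k + 1 : ℕ) * T) := by
    intro k hk
    have hk' : (k + 1 : ℝ) ≤ n := by exact_mod_cast hk
    refine (hint.mono_set (uIcc_subset_uIcc ?_ ?_)).symm <;>
      (rw [uIcc_of_le (by nlinarith)]; push_cast; constructor <;> nlinarith)
  have hfold : ∀ k : ℕ, (fun x => φ x * ((-1) ^ k * f (x - k * T))) =
      fun x => (fun y => φ y * f y) (x - k * T) := by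
    intro k
    funext x
    show _ = φ (x - k * T) * f (x - k * T)
    rw [hφ.sub_nat_mul_eq]
    ring
  have hend : ∀ k : ℕ, b - (k + 1 : ℕ) * T + k * T = b - T := fun k => by push_cast; ring
  have hshift : ∀ k : ℕ, ∫ x in (b - (k + 1 : ℕ) * T)..(b - k * T), φ x * f x =
      ∫ x in (b - T)..b, φ x * ((-1) ^ k * f (x - k * T)) := by
    intro k
    rw [hfold, integral_comp_sub_right (fun y => φ y * f y), ← hend, add_sub_cancel_right]
  have hshift_int : ∀ k ∈ Finset.range n,
      IntervalIntegrable (fun x => φ x * ((-1) ^ k * f (x - k * T))) volume (b - T) b := by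
    intro k hk
    have := (hpiece k (Finset.mem_range.mp hk)).symm.comp_sub_right (k * T)
    rwa [hend, sub_add_cancel, ← hfold] at this
  calc ∫ x in (b - n * T)..b, φ x * f x
      = ∑ k ∈ Finset.range n, ∫ x in (b - (k + 1 : ℕ) * T)..(b - k * T), φ x * f x := by
        have hsum := sum_integral_adjacent_intervals (a := fun k : ℕ => b - k * T) hpiece
        simp only [Nat.cast_zero, zero_mul, sub_zero] at hsum
        rw [integral_symm, ← hsum, ← Finset.sum_neg_distrib]
        exact Finset.sum_congr rfl fun k _ => (integral_symm _ _).symm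
    _ = ∫ x in (b - T)..b, φ x * ∑ k ∈ Finset.range n, (-1) ^ k * f (x - k * T) := by
        simp only [hshift, Finset.mul_sum]
        exact (integral_finsetSum hshift_int).symm

theorem MonotoneOn.indicator_Ioc {w : ℝ → ℝ} {a b : ℝ} (hmono : MonotoneOn w (Ioc a b))
    (hw₀ : ∀ x ∈ Ioc a b, 0 ≤ w x) : MonotoneOn ((Ioc a b).indicator w) (Iic b) := by
  intro x _ y hy hxy
  by_cases hx : x ∈ Ioc a b
  · have hy' : y ∈ Ioc a b := ⟨hx.1.trans_le hxy, hy⟩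
    rw [indicator_of_mem hx, indicator_of_mem hy']
    exact hmono hx hy' hxy
  · rw [indicator_of_notMem hx]
    exact indicator_nonneg hw₀ y

theorem MonotoneOn.alternating_sum_sub_nat_mul_mem_Icc {v : ℝ → ℝ} {b x T : ℝ}
    (hv : MonotoneOn v (Iic b)) (hv₀ : ∀ y ≤ b, 0 ≤ v y) (hx : x ≤ b) (hT : 0 ≤ T) (n : ℕ) :
    ∑ k ∈ Finset.range n, (-1) ^ k * v (x - k * T) ∈ Icc 0 (v x) := by
  have hmem : ∀ k : ℕ, x - k * T ∈ Iic b := fun k =>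
    (sub_le_self x (by positivity)).trans hx
  simpa using alternating_sum_mem_Icc_of_antitone (u := fun k => v (x - k * T))
    (fun i j hij => hv (hmem j) (hmem i) (by gcongr)) (fun k => hv₀ _ (hmem k)) n

theorem abs_intervalIntegral_mul_le_of_antiperiodic {φ w : ℝ → ℝ} {T a b : ℝ}
    (hφ : Antiperiodic φ T) (hφm : AEStronglyMeasurable φ) (hφ₁ : ∀ x, |φ x| ≤ 1) (hT : 0 < T)
    (hw : LocallyIntegrable w) (hw₀ : 0 ≤ w) (hab : a ≤ b) (hmono : MonotoneOn w (Ioc a b)) :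
    |∫ x in a..b, φ x * w x| ≤ ∫ x in (b - T)..b, w x := by
  set v := (Ioc a b).indicator w
  obtain ⟨n, hn⟩ := exists_nat_ge ((b - a) / T)
  have hna : b - n * T ≤ a := by
    rw [div_le_iff₀ hT] at hn
    linarith
  have hv : Integrable v :=
    ((hw.integrableOn_isCompact isCompact_Icc).mono_set Ioc_subset_Icc_self).integrable_indicator
      measurableSet_Ioc
  have hφv : Integrable (fun x => φ x * v x) :=
    hv.bdd_mul hφm (ae_of_all _ fun x => (Real.norm_eq_abs _).trans_le (hφ₁ x))
  have hv₀ : ∀ y, 0 ≤ v y := fun y => indicator_nonneg (fun z _ => hw₀ z) y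
  have hvw : ∀ y, v y ≤ w y := fun y => indicator_le_self' (fun z _ => hw₀ z) y
  have hsum : ∀ x ≤ b, ∑ k ∈ Finset.range n, (-1) ^ k * v (x - k * T) ∈ Icc 0 (v x) :=
    fun x hx => (hmono.indicator_Ioc fun y _ => hw₀ y).alternating_sum_sub_nat_mul_mem_Icc
      (fun y _ => hv₀ y) hx hT.le n
  calc |∫ x in a..b, φ x * w x| = |∫ x in (b - n * T)..b, φ x * v x| := by
        have hφv_eq : (fun x => φ x * v x) = (Ioc a b).indicator (fun x => φ x * w x) :=
          funext fun x => (indicator_mul_right _ _ _).symm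
        rw [hφv_eq, integral_of_le (hna.trans hab), integral_of_le hab,
          setIntegral_indicator measurableSet_Ioc, inter_eq_right.mpr (Ioc_subset_Ioc_left hna)]
    _ = |∫ x in (b - T)..b, φ x * ∑ k ∈ Finset.range n, (-1) ^ k * v (x - k * T)| := by
        rw [hφ.intervalIntegral_mul_eq_alternating_sum hT.le b n hφv.intervalIntegrable]
    _ ≤ ∫ x in (b - T)..b, w x := by
        rw [← Real.norm_eq_abs]
        refine intervalIntegral.norm_integral_le_of_norm_le (by linarith)
          (ae_of_all _ fun x hx => ?_) (hw.integrableOn_isCompact isCompact_uIcc).intervalIntegrable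
        obtain ⟨h₀, h₁⟩ := hsum x hx.2
        rw [Real.norm_eq_abs, abs_mul]
        calc |φ x| * |∑ k ∈ Finset.range n, (-1) ^ k * v (x - k * T)|
            ≤ 1 * v x := by rw [abs_of_nonneg h₀]; exact mul_le_mul (hφ₁ x) h₁ h₀ zero_le_one
          _ = v x := one_mul _
          _ ≤ w x := hvw x

theorem abs_integral_mul_le_of_monotoneOn_general
    (g h : ℝ → ℝ) (p : ℝ) (hp : 0 < p)
    (hgmeas : Measurable g)
    (hganti : ∀ x, g x = -g (x + p / 2))
    (hgbdd : ∀ x, |g x| ≤ 1)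
    (hh : ∀ x, 0 ≤ h x) (hhint : Integrable h)
    (c₁ c₂ : ℝ) (hc₁ : c₁ ≠ 0)
    (a₁ b₁ : ℝ) (hab : a₁ ≤ b₁)
    (hmono : MonotoneOn h (Set.Icc a₁ b₁)) :
    |∫ x in a₁..b₁, g (c₁ * x + c₂) * h x| ≤ ∫ x in (b₁ - p / (2 * |c₁|))..b₁, h x := by
  have hg : Antiperiodic g (p / 2) := fun x => by linarith [hganti x]
  have hφ : Antiperiodic (fun x => g (c₁ * x + c₂)) (p / (2 * |c₁|)) := by
    rw [← div_div]
    exact hg.comp_mul_add hc₁ c₂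
  exact abs_intervalIntegral_mul_le_of_antiperiodic hφ
    (hgmeas.comp ((measurable_const_mul c₁).add_const c₂)).aestronglyMeasurable
    (fun x => hgbdd _) (by positivity) hhint.locallyIntegrable hh hab
    (hmono.mono Ioc_subset_Icc_self)

/-- If `g` is periodic with period `p > 0`, antiperiodic with antiperiod `p/2`,
bounded by `1`, and `h` is a nonnegative integrable function that is monotonically
increasing on `[a₁, b₁]`, then
`|∫_{a₁}^{b₁} g (c₁ x + c₂) h x dx| ≤ ∫_{b₁ - p/(2|c₁|)}^{b₁} h x dx`. -/
theorem abs_integral_mul_le_of_monotoneOn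
    (g h : ℝ → ℝ) (p : ℝ) (hp : 0 < p)
    (hgmeas : Measurable g)
    (hgper : Function.Periodic g p)
    (hganti : ∀ x, g x = -g (x + p / 2))
    (hgbdd : ∀ x, |g x| ≤ 1)
    (hh : ∀ x, 0 ≤ h x) (hhint : Integrable h)
    (c₁ c₂ : ℝ) (hc₁ : c₁ ≠ 0)
    (a₁ b₁ : ℝ) (hab : a₁ ≤ b₁)
    (hmono : MonotoneOn h (Set.Icc a₁ b₁)) :
    |∫ x in a₁..b₁, g (c₁ * x + c₂) * h x| ≤ ∫ x in (b₁ - p / (2 * |c₁|))..b₁, h x :=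
  abs_integral_mul_le_of_monotoneOn_general g h p hp hgmeas hganti hgbdd hh hhint c₁ c₂ hc₁ a₁ b₁
    hab hmono
end

section
/- Let g : ℝ → ℝ be a measurable function that is periodic with period p > 0, satisfies g(x) = −g(x + p/2) for all x ∈ ℝ, and satisfies |g(x)| ≤ 1 for all x. Let h : ℝ → ℝ be a nonnegative Lebesgue-integrable function, let c_1 ≠ 0 and c_2 be real constants, and let [a_2, b_2] be an interval on which h is monotonically decreasing. Then |∫_{a_2}^{b_2} g(c_1 x + c_2) h(x) dx| ≤ ∫_{a_2}^{a_2 + p/(2|c_1|)} h(x) dx. -/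
open MeasureTheory intervalIntegral Function

/-!
The function `f x = g (c₁ x + c₂)` is antiperiodic with antiperiod `T = p / (2|c₁|)`. Over two
consecutive blocks of length `T` the antiperiodicity gives
`∫_a^{a+2T} f h = ∫_a^{a+T} f (h - h(· + T))`, and for antitone `h` this is at most
`∫_a^{a+T} h - ∫_{a+T}^{a+2T} h` in absolute value. Replacing `h` by `0` beyond `b₂` keeps it
nonnegative and antitone on `[a₂, ∞)`, so an induction over pairs of blocks, in which the bound
for the remaining blocks is absorbed by the subtracted `∫_{a+T}^{a+2T} h`, gives the claim.
-/

theorem Function.Antiperiodic.abs_period {f : ℝ → ℝ} {c : ℝ} (hf : Antiperiodic f c) :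
    Antiperiodic f |c| := by
  rcases abs_choice c with hc | hc <;> rw [hc]
  exacts [hf, hf.neg]

section

variable {f h : ℝ → ℝ} {T a b : ℝ}

theorem AntitoneOn.intervalIntegrable_of_subset {s : Set ℝ} (hanti : AntitoneOn h s)
    (hab : a ≤ b) (hs : Set.Icc a b ⊆ s) : IntervalIntegrable h volume a b :=
  (hanti.mono (by rwa [Set.uIcc_of_le hab])).intervalIntegrable

theorem AntitoneOn.intervalIntegrable_comp_add_right {c : ℝ}
    (hanti : AntitoneOn h (Set.Icc (a + c) (b + c))) (hab : a ≤ b) :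
    IntervalIntegrable (fun x => h (x + c)) volume a b := by
  refine AntitoneOn.intervalIntegrable_of_subset (s := Set.Icc a b) ?_ hab subset_rfl
  exact fun x hx y hy hxy => hanti ⟨by linarith [hx.1], by linarith [hx.2]⟩
    ⟨by linarith [hy.1], by linarith [hy.2]⟩ (by linarith)

theorem integral_add_le_integral_of_antitoneOn (hT : 0 ≤ T) (hab : a ≤ b)
    (hanti : AntitoneOn h (Set.Icc a (b + T))) :
    ∫ x in a + T..b + T, h x ≤ ∫ x in a..b, h x := by
  have hshift : IntervalIntegrable (fun x => h (x + T)) volume a b :=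
    (hanti.mono (Set.Icc_subset_Icc_left (by linarith))).intervalIntegrable_comp_add_right hab
  rw [← integral_comp_add_right]
  exact integral_mono_on hab hshift
    (hanti.intervalIntegrable_of_subset hab (Set.Icc_subset_Icc_right (by linarith)))
    fun x hx => hanti ⟨hx.1, by linarith [hx.2]⟩ ⟨by linarith [hx.1], by linarith [hx.2]⟩
      (by linarith)

theorem Function.Antiperiodic.integral_mul_eq_integral_mul_sub_shift
    (hf : Antiperiodic f T) (hfh : Integrable (fun x => f x * h x)) :
    ∫ x in a..a + 2 * T, f x * h x = ∫ x in a..a + T, f x * (h x - h (x + T)) := by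
  have hfhT : Integrable (fun x => f x * h (x + T)) := by
    simpa [hf _] using (hfh.comp_add_right T).neg
  have hshift : ∫ x in a + T..a + 2 * T, f x * h x = -∫ x in a..a + T, f x * h (x + T) := by
    rw [← intervalIntegral.integral_neg, show a + 2 * T = a + T + T by ring,
      ← integral_comp_add_right (fun x => f x * h x)]
    simp only [hf _, neg_mul]
  simp only [mul_sub]
  rw [← integral_add_adjacent_intervals (b := a + T) hfh.intervalIntegrable
    hfh.intervalIntegrable, hshift, integral_sub hfh.intervalIntegrable hfhT.intervalIntegrable,
    sub_eq_add_neg]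

theorem abs_integral_mul_sub_shift_le (hT : 0 ≤ T) (hf1 : ∀ x, |f x| ≤ 1)
    (hanti : AntitoneOn h (Set.Icc a (a + 2 * T))) :
    |∫ x in a..a + T, f x * (h x - h (x + T))| ≤
      (∫ x in a..a + T, h x) - ∫ x in a + T..a + 2 * T, h x := by
  have hint : IntervalIntegrable h volume a (a + T) :=
    hanti.intervalIntegrable_of_subset (by linarith) (Set.Icc_subset_Icc_right (by linarith))
  have hshift : IntervalIntegrable (fun x => h (x + T)) volume a (a + T) :=
    AntitoneOn.intervalIntegrable_comp_add_right
      (hanti.mono (Set.Icc_subset_Icc (by linarith) (by linarith))) (by linarith)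
  calc |∫ x in a..a + T, f x * (h x - h (x + T))|
      ≤ ∫ x in a..a + T, (h x - h (x + T)) := by
        rw [← Real.norm_eq_abs]
        refine norm_integral_le_of_norm_le (by linarith) (ae_of_all _ fun x hx => ?_)
          (hint.sub hshift)
        have hdrop : 0 ≤ h x - h (x + T) := sub_nonneg.2 <|
          hanti ⟨hx.1.le, by linarith [hx.2]⟩ ⟨by linarith [hx.1], by linarith [hx.2]⟩
            (by linarith)
        rw [Real.norm_eq_abs, abs_mul, abs_of_nonneg hdrop]
        exact mul_le_of_le_one_left hdrop (hf1 x)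
    _ = (∫ x in a..a + T, h x) - ∫ x in a + T..a + 2 * T, h x := by
        rw [integral_sub hint hshift, integral_comp_add_right, show a + T + T = a + 2 * T by ring]

theorem Function.Antiperiodic.abs_integral_mul_le_of_antitoneOn_Ici
    (hfm : AEStronglyMeasurable f) (hf : Antiperiodic f T) (hT : 0 ≤ T)
    (hf1 : ∀ x, |f x| ≤ 1) (hh : ∀ x, 0 ≤ h x) (hint : Integrable h)
    (hanti : AntitoneOn h (Set.Ici a)) (n : ℕ) :
    |∫ x in a..a + 2 * n * T, f x * h x| ≤ ∫ x in a..a + T, h x := by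
  induction n generalizing a with
  | zero => simpa using integral_nonneg (by linarith) fun x _ => hh x
  | succ n ih =>
    have hfh : Integrable (fun x => f x * h x) :=
      hint.bdd_mul hfm (ae_of_all _ fun x => (Real.norm_eq_abs _).trans_le (hf1 x))
    have hcmp := integral_add_le_integral_of_antitoneOn hT (by linarith : a + T ≤ a + 2 * T)
      (hanti.mono fun x hx => (by linarith [hx.1] : a ≤ x))
    rw [show a + T + T = a + 2 * T by ring] at hcmp
    rw [show a + 2 * ↑(n + 1) * T = a + 2 * T + 2 * n * T by push_cast; ring,
      ← integral_add_adjacent_intervals (b := a + 2 * T) hfh.intervalIntegrable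
        hfh.intervalIntegrable, hf.integral_mul_eq_integral_mul_sub_shift hfh]
    calc _ ≤ |∫ x in a..a + T, f x * (h x - h (x + T))|
          + |∫ x in a + 2 * T..a + 2 * T + 2 * n * T, f x * h x| := abs_add_le _ _
      _ ≤ ((∫ x in a..a + T, h x) - ∫ x in a + T..a + 2 * T, h x)
          + ∫ x in a + 2 * T..a + 2 * T + T, h x :=
        add_le_add (abs_integral_mul_sub_shift_le hT hf1 (hanti.mono Set.Icc_subset_Ici_self))
          (ih (hanti.mono (Set.Ici_subset_Ici.2 (by linarith))))
      _ ≤ ∫ x in a..a + T, h x := by linarith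

theorem AntitoneOn.indicator_Iic (hanti : AntitoneOn h (Set.Icc a b)) (hh : ∀ x, 0 ≤ h x) :
    AntitoneOn ((Set.Iic b).indicator h) (Set.Ici a) := by
  intro x hx y _ hxy
  by_cases hyb : y ≤ b
  · rw [Set.indicator_of_mem (Set.mem_Iic.2 hyb),
      Set.indicator_of_mem (Set.mem_Iic.2 (hxy.trans hyb))]
    exact hanti ⟨hx, hxy.trans hyb⟩ ⟨hx.trans hxy, hyb⟩ hxy
  · rw [Set.indicator_of_notMem (mt Set.mem_Iic.1 hyb)]
    exact Set.indicator_nonneg (fun z _ => hh z) x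

theorem Function.Antiperiodic.abs_integral_mul_le_of_antitoneOn
    (hfm : AEStronglyMeasurable f) (hf : Antiperiodic f T) (hT : 0 < T)
    (hf1 : ∀ x, |f x| ≤ 1) (hh : ∀ x, 0 ≤ h x) (hint : Integrable h) (hab : a ≤ b)
    (hanti : AntitoneOn h (Set.Icc a b)) :
    |∫ x in a..b, f x * h x| ≤ ∫ x in a..a + T, h x := by
  obtain ⟨n, hn⟩ : ∃ n : ℕ, b ≤ a + 2 * n * T := by
    obtain ⟨n, hn⟩ := exists_nat_ge ((b - a) / (2 * T))
    exact ⟨n, by rw [div_le_iff₀ (by positivity)] at hn; linarith⟩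
  have htrunc : ∫ x in a..b, f x * h x =
      ∫ x in a..a + 2 * n * T, f x * (Set.Iic b).indicator h x := by
    simp_rw [← Set.indicator_mul_right]
    exact (integral_indicator ⟨hab, hn⟩).symm
  have hle : ∫ x in a..a + T, (Set.Iic b).indicator h x ≤ ∫ x in a..a + T, h x :=
    integral_mono_on (by linarith) (hint.indicator measurableSet_Iic).intervalIntegrable
      hint.intervalIntegrable fun x _ => Set.indicator_le_self' (fun x _ => hh x) x
  rw [htrunc]
  exact (hf.abs_integral_mul_le_of_antitoneOn_Ici hfm hT.le hf1
    (fun x => Set.indicator_nonneg (fun z _ => hh z) x) (hint.indicator measurableSet_Iic)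
    (hanti.indicator_Iic hh) n).trans hle

end

/-- If `g` is periodic with period `p > 0`, antiperiodic with antiperiod `p/2`,
bounded by `1`, and `h` is a nonnegative integrable function that is monotonically
decreasing on `[a₂, b₂]`, then
`|∫_{a₂}^{b₂} g (c₁ x + c₂) h x dx| ≤ ∫_{a₂}^{a₂ + p/(2|c₁|)} h x dx`. -/
theorem abs_integral_mul_le_of_antitoneOn
    (g h : ℝ → ℝ) (p : ℝ) (hp : 0 < p)
    (hgmeas : Measurable g)
    (hganti : ∀ x, g x = -g (x + p / 2))
    (hgbdd : ∀ x, |g x| ≤ 1)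
    (hh : ∀ x, 0 ≤ h x) (hhint : Integrable h)
    (c₁ c₂ : ℝ) (hc₁ : c₁ ≠ 0)
    (a₂ b₂ : ℝ) (hab : a₂ ≤ b₂)
    (hanti : AntitoneOn h (Set.Icc a₂ b₂)) :
    |∫ x in a₂..b₂, g (c₁ * x + c₂) * h x| ≤ ∫ x in a₂..(a₂ + p / (2 * |c₁|)), h x := by
  have hg : Antiperiodic g (p / 2) := fun x => by rw [hganti x, neg_neg]
  have hf : Antiperiodic (fun x => g (c₁ * x + c₂)) (p / (2 * |c₁|)) := by
    convert ((hg.add_const c₂).const_mul hc₁).abs_period using 1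
    rw [abs_mul, abs_inv, abs_of_pos (half_pos hp)]
    field_simp
  exact hf.abs_integral_mul_le_of_antitoneOn (hgmeas.comp (by fun_prop)).aestronglyMeasurable
    (by positivity) (fun x => hgbdd _) hh hhint hab hanti
end

section
/- Fix real numbers D > 0 and L ≥ 2D, and let C_T = [0,D]×[0,D] and C_R = [L, L+D]×[0,D] be squares in the Euclidean plane ℝ². Let u, v ∈ C_T with u ≠ v, and suppose the straight line through u and v does not intersect C_R. Then for every point s ∈ C_R, the (unsigned) angle ∠(u, s, v) at vertex s between the rays from s to u and from s to v satisfies ∠(u, s, v) ≥ min{ ∠(u, c, v) : c ∈ {(L,0), (L+D,0), (L+D,D), (L,D)} }, i.e., the angle subtended at s by the segment uv is at least the minimum of the angles subtended at the four corners of C_R. -/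
/-!
Write `A p = cross (u - p) (v - p)` and `B p = ⟪u - p, v - p⟫`. Where `A p > 0`, the angle is
`∠ u p v = π / 2 - arctan (B p / A p)`, so a small angle means a large cotangent `B / A`.
`A` is affine in `p` and vanishes only on the line `uv`, so it has constant sign on a convex set
missing that line; after swapping `u` and `v` it is positive. For every `k` the function
`B - k A` is `‖p‖²` plus an affine function, hence convex, so along a segment the cotangent
is at most its larger value at the endpoints: the angle is at least the smaller endpoint angle.
A point of a rectangle lies on a horizontal segment joining its two vertical sides, and each
endpoint lies on a side joining two corners.
-/

open EuclideanGeometry Real Set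
open scoped InnerProductSpace

local notation "ℝ²" => EuclideanSpace ℝ (Fin 2)

namespace EuclideanSpace

def cross (x y : ℝ²) : ℝ := x 0 * y 1 - x 1 * y 0

def rectangle (a b c d : ℝ) : Set ℝ² := {p | p 0 ∈ Icc a b ∧ p 1 ∈ Icc c d}

theorem cross_anticomm (x y : ℝ²) : cross y x = -cross x y := by
  unfold cross; ring

theorem inner_sq_add_cross_sq (x y : ℝ²) : ⟪x, y⟫_ℝ ^ 2 + cross x y ^ 2 = ‖x‖ ^ 2 * ‖y‖ ^ 2 := by
  simp only [cross, EuclideanSpace.norm_sq_eq, PiLp.inner_apply, Fin.sum_univ_two,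
    RCLike.inner_apply, conj_trivial, Real.norm_eq_abs, sq_abs]
  ring

theorem angle_eq_pi_div_two_sub_arctan {x y : ℝ²} (h : 0 < cross x y) :
    InnerProductGeometry.angle x y = π / 2 - arctan (⟪x, y⟫_ℝ / cross x y) := by
  have hnorm : ‖x‖ * ‖y‖ = cross x y * √(1 + (⟪x, y⟫_ℝ / cross x y) ^ 2) := by
    refine (pow_left_inj₀ (by positivity) (by positivity) two_ne_zero).1 ?_
    rw [mul_pow, mul_pow, sq_sqrt (by positivity), ← inner_sq_add_cross_sq]
    field_simp
    ring
  rw [InnerProductGeometry.angle, hnorm, ← div_div, ← sin_arctan, arccos_eq_pi_div_two_sub_arcsin,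
    arcsin_sin (neg_pi_div_two_lt_arctan _).le (arctan_lt_pi_div_two _).le]

theorem mem_affineSpan_pair_of_cross_eq_zero {u v p : ℝ²} (huv : u ≠ v)
    (h : cross (u - p) (v - p) = 0) : p ∈ line[ℝ, u, v] := by
  have hw : (v 0 - u 0) ^ 2 + (v 1 - u 1) ^ 2 ≠ 0 := by
    have : ‖v - u‖ ^ 2 ≠ 0 := by simpa [sub_eq_zero] using huv.symm
    simpa [EuclideanSpace.norm_sq_eq, Fin.sum_univ_two] using this
  -- `p` is its own orthogonal projection onto the line, taken at this parameter
  convert AffineMap.lineMap_mem_affineSpan_pair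
    (((p 0 - u 0) * (v 0 - u 0) + (p 1 - u 1) * (v 1 - u 1)) /
      ((v 0 - u 0) ^ 2 + (v 1 - u 1) ^ 2)) u v
  simp only [cross, PiLp.sub_apply] at h
  ext i
  fin_cases i <;> simp [AffineMap.lineMap_apply] <;> field_simp
  · linear_combination (-(v 1 - u 1)) * h
  · linear_combination (v 0 - u 0) * h

theorem continuous_cross_sub_sub (u v : ℝ²) : Continuous fun p => cross (u - p) (v - p) := by
  unfold cross; fun_prop

theorem convexOn_inner_sub_sub_cross (u v : ℝ²) (k : ℝ) :
    ConvexOn ℝ univ fun p => ⟪u - p, v - p⟫_ℝ - k * cross (u - p) (v - p) := by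
  refine ⟨convex_univ, fun x _ y _ a b ha hb hab => ?_⟩
  obtain rfl := eq_sub_of_add_eq' hab
  simp only [cross, PiLp.inner_apply, Fin.sum_univ_two, RCLike.inner_apply, conj_trivial,
    PiLp.sub_apply, PiLp.add_apply, PiLp.smul_apply, smul_eq_mul]
  nlinarith [mul_nonneg ha hb, sq_nonneg (x 0 - y 0), sq_nonneg (x 1 - y 1)]

theorem cross_sub_sub_pos_of_isPreconnected {u v : ℝ²} (huv : u ≠ v) {K : Set ℝ²}
    (hK : IsPreconnected K) (hline : ∀ p ∈ line[ℝ, u, v], p ∉ K) {x y : ℝ²} (hx : x ∈ K)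
    (hy : y ∈ K) (hxpos : 0 < cross (u - x) (v - x)) : 0 < cross (u - y) (v - y) := by
  by_contra! hy'
  obtain ⟨p, hpK, hp⟩ := hK.intermediate_value hy hx (continuous_cross_sub_sub u v).continuousOn
    ⟨hy', hxpos.le⟩
  exact hline p (mem_affineSpan_pair_of_cross_eq_zero huv hp) hpK

theorem min_angle_le_angle_of_mem_segment_of_cross_pos {u v x y z : ℝ²} (huv : u ≠ v)
    (hline : ∀ p ∈ line[ℝ, u, v], p ∉ segment ℝ x y) (hz : z ∈ segment ℝ x y)
    (hx : 0 < cross (u - x) (v - x)) : min (∠ u x v) (∠ u y v) ≤ ∠ u z v := by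
  have hpos : ∀ p ∈ segment ℝ x y, 0 < cross (u - p) (v - p) := fun p hp =>
    cross_sub_sub_pos_of_isPreconnected huv (convex_segment x y).isPreconnected hline
      (left_mem_segment ℝ x y) hp hx
  have hangle : ∀ p ∈ segment ℝ x y,
      ∠ u p v = π / 2 - arctan (⟪u - p, v - p⟫_ℝ / cross (u - p) (v - p)) := fun p hp =>
    angle_eq_pi_div_two_sub_arctan (hpos p hp)
  set k := max (⟪u - x, v - x⟫_ℝ / cross (u - x) (v - x)) (⟪u - y, v - y⟫_ℝ / cross (u - y) (v - y))
  have hcot : ∀ p ∈ segment ℝ x y, ⟪u - p, v - p⟫_ℝ / cross (u - p) (v - p) ≤ k ↔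
      ⟪u - p, v - p⟫_ℝ - k * cross (u - p) (v - p) ≤ 0 := fun p hp => by
    rw [div_le_iff₀ (hpos p hp), sub_nonpos]
  have hz' : ⟪u - z, v - z⟫_ℝ / cross (u - z) (v - z) ≤ k := by
    rw [hcot z hz]
    refine ((convexOn_inner_sub_sub_cross u v k).le_on_segment trivial trivial hz).trans ?_
    exact max_le ((hcot x (left_mem_segment ℝ x y)).1 (le_max_left _ _))
      ((hcot y (right_mem_segment ℝ x y)).1 (le_max_right _ _))
  rw [hangle x (left_mem_segment ℝ x y), hangle y (right_mem_segment ℝ x y), hangle z hz,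
    min_sub_sub_left, ← arctan_strictMono.monotone.map_max]
  exact sub_le_sub_left (arctan_strictMono.monotone hz') _

theorem min_angle_le_angle_of_mem_segment {u v x y z : ℝ²} (huv : u ≠ v)
    (hline : ∀ p ∈ line[ℝ, u, v], p ∉ segment ℝ x y) (hz : z ∈ segment ℝ x y) :
    min (∠ u x v) (∠ u y v) ≤ ∠ u z v := by
  have hx : cross (u - x) (v - x) ≠ 0 := fun h =>
    hline x (mem_affineSpan_pair_of_cross_eq_zero huv h) (left_mem_segment ℝ x y)
  rcases hx.lt_or_gt with hneg | hpos
  · have hline' : ∀ p ∈ line[ℝ, v, u], p ∉ segment ℝ x y := by rwa [Set.pair_comm]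
    have := min_angle_le_angle_of_mem_segment_of_cross_pos huv.symm hline' hz
      (by rw [cross_anticomm]; linarith)
    simpa only [angle_comm v _ u] using this
  · exact min_angle_le_angle_of_mem_segment_of_cross_pos huv hline hz hpos

theorem convex_rectangle (a b c d : ℝ) : Convex ℝ (rectangle a b c d) :=
  ((convex_Icc a b).linear_preimage (EuclideanSpace.proj 0 : ℝ² →L[ℝ] ℝ).toLinearMap).inter
    ((convex_Icc c d).linear_preimage (EuclideanSpace.proj 1 : ℝ² →L[ℝ] ℝ).toLinearMap)

theorem toLp_mem_segment_of_mem_segment_left {a b x : ℝ} (hx : x ∈ segment ℝ a b) (y : ℝ) :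
    !₂[x, y] ∈ segment ℝ !₂[a, y] !₂[b, y] := by
  obtain ⟨s, t, hs, ht, hst, rfl⟩ := hx
  refine ⟨s, t, hs, ht, hst, ?_⟩
  ext i
  fin_cases i <;> simp [← add_mul, hst]

theorem toLp_mem_segment_of_mem_segment_right {a b y : ℝ} (x : ℝ) (hy : y ∈ segment ℝ a b) :
    !₂[x, y] ∈ segment ℝ !₂[x, a] !₂[x, b] := by
  obtain ⟨s, t, hs, ht, hst, rfl⟩ := hy
  refine ⟨s, t, hs, ht, hst, ?_⟩
  ext i
  fin_cases i <;> simp [← add_mul, hst]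

theorem min_corner_angle_le_angle_of_mem_rectangle {u v : ℝ²} (huv : u ≠ v) {a b c d : ℝ}
    (hline : ∀ p ∈ line[ℝ, u, v], p ∉ rectangle a b c d) {s : ℝ²} (hs : s ∈ rectangle a b c d) :
    min (min (∠ u !₂[a, c] v) (∠ u !₂[b, c] v)) (min (∠ u !₂[b, d] v) (∠ u !₂[a, d] v))
      ≤ ∠ u s v := by
  obtain ⟨hs0, hs1⟩ := hs
  have key : ∀ {x y z}, x ∈ rectangle a b c d → y ∈ rectangle a b c d → z ∈ segment ℝ x y →
      min (∠ u x v) (∠ u y v) ≤ ∠ u z v := fun hx hy hz =>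
    min_angle_le_angle_of_mem_segment huv
      (fun p hp hpxy => hline p hp ((convex_rectangle a b c d).segment_subset hx hy hpxy)) hz
  have hmem : ∀ {x y : ℝ}, x ∈ Icc a b → y ∈ Icc c d → !₂[x, y] ∈ rectangle a b c d :=
    fun hx hy => ⟨hx, hy⟩
  have ha := left_mem_Icc.2 (hs0.1.trans hs0.2)
  have hb := right_mem_Icc.2 (hs0.1.trans hs0.2)
  have hc := left_mem_Icc.2 (hs1.1.trans hs1.2)
  have hd := right_mem_Icc.2 (hs1.1.trans hs1.2)
  have hleft : min (∠ u !₂[a, c] v) (∠ u !₂[a, d] v) ≤ ∠ u !₂[a, s 1] v :=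
    key (hmem ha hc) (hmem ha hd) (toLp_mem_segment_of_mem_segment_right a (Icc_subset_segment hs1))
  have hright : min (∠ u !₂[b, c] v) (∠ u !₂[b, d] v) ≤ ∠ u !₂[b, s 1] v :=
    key (hmem hb hc) (hmem hb hd) (toLp_mem_segment_of_mem_segment_right b (Icc_subset_segment hs1))
  have hmid : min (∠ u !₂[a, s 1] v) (∠ u !₂[b, s 1] v) ≤ ∠ u !₂[s 0, s 1] v :=
    key (hmem ha hs1) (hmem hb hs1)
      (toLp_mem_segment_of_mem_segment_left (Icc_subset_segment hs0) _)
  calc _ ≤ min (min (∠ u !₂[a, c] v) (∠ u !₂[a, d] v)) (min (∠ u !₂[b, c] v) (∠ u !₂[b, d] v)) := by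
        simp only [le_min_iff, min_le_iff, le_refl, true_or, or_true, and_self]
    _ ≤ _ := min_le_min hleft hright
    _ ≤ ∠ u !₂[s 0, s 1] v := hmid
    _ = ∠ u s v := by congr; ext i; fin_cases i <;> rfl

end EuclideanSpace

theorem angle_ge_min_corner_angle_general
    (D L : ℝ)
    (CR : Set (EuclideanSpace ℝ (Fin 2)))
    (hCR : CR = {p | p 0 ∈ Set.Icc L (L + D) ∧ p 1 ∈ Set.Icc 0 D})
    (u v : EuclideanSpace ℝ (Fin 2)) (huv : u ≠ v)
    (hline : ∀ p ∈ affineSpan ℝ ({u, v} : Set (EuclideanSpace ℝ (Fin 2))), p ∉ CR)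
    (s : EuclideanSpace ℝ (Fin 2)) (hs : s ∈ CR) :
    min (min (∠ u ((WithLp.equiv 2 (Fin 2 → ℝ)).symm ![L, 0]) v)
             (∠ u ((WithLp.equiv 2 (Fin 2 → ℝ)).symm ![L + D, 0]) v))
        (min (∠ u ((WithLp.equiv 2 (Fin 2 → ℝ)).symm ![L + D, D]) v)
             (∠ u ((WithLp.equiv 2 (Fin 2 → ℝ)).symm ![L, D]) v))
      ≤ ∠ u s v := by
  subst hCR
  exact EuclideanSpace.min_corner_angle_le_angle_of_mem_rectangle huv hline hs

/-- If `u ≠ v` lie in the square `C_T = [0,D] × [0,D]`, the line through `u` and `v`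
does not intersect the square `C_R = [L, L+D] × [0,D]` (where `L ≥ 2D > 0`), then for
every `s ∈ C_R` the angle `∠ u s v` is at least the minimum of the angles subtended
at the four corners of `C_R`. -/
theorem angle_ge_min_corner_angle
    (D L : ℝ) (hD : 0 < D) (hL : 2 * D ≤ L)
    (CT CR : Set (EuclideanSpace ℝ (Fin 2)))
    (hCT : CT = {p | p 0 ∈ Set.Icc 0 D ∧ p 1 ∈ Set.Icc 0 D})
    (hCR : CR = {p | p 0 ∈ Set.Icc L (L + D) ∧ p 1 ∈ Set.Icc 0 D})
    (u v : EuclideanSpace ℝ (Fin 2)) (hu : u ∈ CT) (hv : v ∈ CT) (huv : u ≠ v)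
    (hline : ∀ p ∈ affineSpan ℝ ({u, v} : Set (EuclideanSpace ℝ (Fin 2))), p ∉ CR)
    (s : EuclideanSpace ℝ (Fin 2)) (hs : s ∈ CR) :
    min (min (∠ u ((WithLp.equiv 2 (Fin 2 → ℝ)).symm ![L, 0]) v)
             (∠ u ((WithLp.equiv 2 (Fin 2 → ℝ)).symm ![L + D, 0]) v))
        (min (∠ u ((WithLp.equiv 2 (Fin 2 → ℝ)).symm ![L + D, D]) v)
             (∠ u ((WithLp.equiv 2 (Fin 2 → ℝ)).symm ![L, D]) v))
      ≤ ∠ u s v :=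
  angle_ge_min_corner_angle_general D L CR hCR u v huv hline s hs
end

section
/- Fix real numbers D > 0, L ≥ 2D, and λ > 0, and set a_max = L/(L−D), so that a_{ik} ≤ a_max for all indices. Then for every integer w ≥ 2, E[ ( Σ_{1≤i<j≤w} Σ_{1≤k<l≤w} ( Q_{ijkl} − E[Q_{1212}] ) )² ] ≤ 2 a_max⁸ · (w²(w−1)²/4) · ( (w²(w−1)² − (w−2)²(w−3)²)/4 ). (This uses that Q_{i₁j₁k₁l₁} and Q_{i₂j₂k₂l₂} are independent whenever {i₁,j₁} ∩ {i₂,j₂} = ∅ and {k₁,l₁} ∩ {k₂,l₂} = ∅, that each covariance is at most 2 a_max⁸ in absolute value, and that for each fixed (i₁,j₁,k₁,l₁) at least (w−2)²(w−3)²/4 of the w²(w−1)²/4 index quadruples (i₂<j₂, k₂<l₂) in {1,...,w} are disjoint from it in both coordinates.) -/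
/-!
Write `Q_t` for `t = ((i, j), (k, l))` with `i < j`, `k < l`. The law of `(s_i, s_j, u_k, u_l)`
is the product of the four uniform laws, so all `Q_t` share the mean `E[Q_{1212}]` and the
integral is `Var[∑ Q_t] = ∑_{t, t'} cov(Q_t, Q_t')`. A covariance vanishes when the index pairs
of `t` and `t'` are disjoint in both coordinates, by independence; any other one is at most
`a_max⁸`, because `|Q_t| ≤ a_max⁴` bounds each variance by `a_max⁸` and
`2 cov(X, Y) ≤ Var X + Var Y`. For fixed `t` at most `N² - M²` indices `t'` are not doubly
disjoint, where `N = C(w, 2)` and `M = C(w - 2, 2)`, so the integral is at most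
`a_max⁸ N² (N² - M²)`, half the stated bound.
-/

open MeasureTheory

noncomputable section

/-- The random variable
`Q_{ijkl} = a_{ik} a_{il} a_{jk} a_{jl} cos((2π/λ)(d_{ik} - d_{il} - d_{jk} + d_{jl}))`
where `d_{ik} = ‖s_i - u_k‖` and `a_{ik} = L / d_{ik}`. -/
def Q {Ω : Type*} (L lam : ℝ) (u s : ℕ → Ω → EuclideanSpace ℝ (Fin 2))
    (i j k l : ℕ) (ω : Ω) : ℝ :=
  (L / dist (s i ω) (u k ω)) * (L / dist (s i ω) (u l ω)) *
    (L / dist (s j ω) (u k ω)) * (L / dist (s j ω) (u l ω)) *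
    Real.cos ((2 * Real.pi / lam) *
      (dist (s i ω) (u k ω) - dist (s i ω) (u l ω) -
        dist (s j ω) (u k ω) + dist (s j ω) (u l ω)))

open ProbabilityTheory Finset

section Pairs

variable {α : Type*} [LinearOrder α]

def increasingPairs (s : Finset α) : Finset (α × α) := {p ∈ s ×ˢ s | p.1 < p.2}

def pairSet (p : α × α) : Finset α := {p.1, p.2}

lemma card_increasingPairs (s : Finset α) : #(increasingPairs s) = (#s).choose 2 :=
  card_product_filter_lt

lemma card_sdiff_pairSet {s : Finset α} {p : α × α} (hp : p ∈ increasingPairs s) :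
    #(s \ pairSet p) = #s - 2 := by
  simp only [increasingPairs, mem_filter, mem_product] at hp
  obtain ⟨⟨h₁, h₂⟩, hlt⟩ := hp
  rw [card_sdiff_of_subset (by simp [pairSet, insert_subset_iff, h₁, h₂]), pairSet,
    card_pair hlt.ne]

lemma increasingPairs_sdiff_pairSet_subset (s : Finset α) (p : α × α) :
    increasingPairs (s \ pairSet p) ⊆
      {q ∈ increasingPairs s | Disjoint (pairSet p) (pairSet q)} := by
  intro q hq
  simp only [increasingPairs, mem_filter, mem_product, mem_sdiff] at hq
  refine mem_filter.2 ⟨mem_filter.2 ⟨mem_product.2 ⟨hq.1.1.1, hq.1.2.1⟩, hq.2⟩, ?_⟩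
  rw [pairSet, pairSet, disjoint_insert_right, disjoint_singleton_right]
  exact ⟨hq.1.1.2, hq.1.2.2⟩

lemma card_filter_not_disjoint_pairSet_le (s : Finset α) {t : (α × α) × (α × α)}
    (ht : t ∈ increasingPairs s ×ˢ increasingPairs s) :
    #{t' ∈ increasingPairs s ×ˢ increasingPairs s |
        ¬(Disjoint (pairSet t.1) (pairSet t'.1) ∧ Disjoint (pairSet t.2) (pairSet t'.2))} ≤
      (#s).choose 2 ^ 2 - (#s - 2).choose 2 ^ 2 := by
  have hsplit := card_filter_add_card_filter_not (s := increasingPairs s ×ˢ increasingPairs s)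
    (p := fun t' => Disjoint (pairSet t.1) (pairSet t'.1) ∧ Disjoint (pairSet t.2) (pairSet t'.2))
  have hdisj : (#s - 2).choose 2 ^ 2 ≤
      #{t' ∈ increasingPairs s ×ˢ increasingPairs s |
        Disjoint (pairSet t.1) (pairSet t'.1) ∧ Disjoint (pairSet t.2) (pairSet t'.2)} := by
    rw [mem_product] at ht
    calc (#s - 2).choose 2 ^ 2
        = #(increasingPairs (s \ pairSet t.1) ×ˢ increasingPairs (s \ pairSet t.2)) := by
          rw [card_product, card_increasingPairs, card_increasingPairs,
            card_sdiff_pairSet ht.1, card_sdiff_pairSet ht.2, sq]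
      _ ≤ _ := by
          refine card_le_card fun t' ht' => ?_
          rw [mem_product] at ht'
          have h₁ := increasingPairs_sdiff_pairSet_subset s t.1 ht'.1
          have h₂ := increasingPairs_sdiff_pairSet_subset s t.2 ht'.2
          rw [mem_filter] at h₁ h₂ ⊢
          exact ⟨mem_product.2 ⟨h₁.1, h₂.1⟩, h₁.2, h₂.2⟩
  rw [card_product, card_increasingPairs, ← sq] at hsplit
  omega

lemma sum_Icc_Ioc_eq_sum_increasingPairs [LocallyFiniteOrder α] {M : Type*} [AddCommMonoid M]
    (a b : α) (g : α → α → M) :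
    ∑ i ∈ Icc a b, ∑ j ∈ Ioc i b, g i j = ∑ p ∈ increasingPairs (Icc a b), g p.1 p.2 := by
  rw [increasingPairs, sum_filter, sum_product]
  refine sum_congr rfl fun i hi => ?_
  rw [← sum_filter]
  congr 1
  ext j
  simp only [mem_Ioc, mem_filter, mem_Icc] at hi ⊢
  constructor
  · rintro ⟨hij, hjb⟩; exact ⟨⟨hi.1.trans hij.le, hjb⟩, hij⟩
  · rintro ⟨⟨-, hjb⟩, hij⟩; exact ⟨hij, hjb⟩

lemma sum_Icc_Ioc_sum_Icc_Ioc_eq_sum_product [LocallyFiniteOrder α] {M : Type*}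
    [AddCommMonoid M] (a b : α) (f : α → α → α → α → M) :
    ∑ i ∈ Icc a b, ∑ j ∈ Ioc i b, ∑ k ∈ Icc a b, ∑ l ∈ Ioc k b, f i j k l =
      ∑ t ∈ increasingPairs (Icc a b) ×ˢ increasingPairs (Icc a b),
        f t.1.1 t.1.2 t.2.1 t.2.2 := by
  simp only [sum_product, sum_Icc_Ioc_eq_sum_increasingPairs]

lemma cast_choose_two_sq_mul_sub_le (w : ℕ) (hw : 2 ≤ w) {c : ℝ} (hc : 0 ≤ c) :
    ((w.choose 2 * w.choose 2 : ℕ) : ℝ) * (((w.choose 2 ^ 2 - (w - 2).choose 2 ^ 2 : ℕ) : ℝ) * c) ≤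
      2 * c * ((w : ℝ) ^ 2 * ((w : ℝ) - 1) ^ 2 / 4) *
        (((w : ℝ) ^ 2 * ((w : ℝ) - 1) ^ 2 - ((w : ℝ) - 2) ^ 2 * ((w : ℝ) - 3) ^ 2) / 4) := by
  have hnonneg : 0 ≤ ((w.choose 2 * w.choose 2 : ℕ) : ℝ) *
      ((w.choose 2 ^ 2 - (w - 2).choose 2 ^ 2 : ℕ) : ℝ) * c := by positivity
  rw [Nat.cast_sub (Nat.pow_le_pow_left (Nat.choose_le_choose 2 (Nat.sub_le w 2)) 2)] at hnonneg ⊢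
  push_cast [Nat.cast_choose_two, Nat.cast_sub hw] at hnonneg ⊢
  nlinarith [hnonneg]

end Pairs

section Variance

variable {Ω ι : Type*} {mΩ : MeasurableSpace Ω} {μ : Measure Ω}

lemma covariance_le_of_variance_le [IsFiniteMeasure μ] {X Y : Ω → ℝ} {C : ℝ}
    (hX : MemLp X 2 μ) (hY : MemLp Y 2 μ) (hXC : Var[X; μ] ≤ C) (hYC : Var[Y; μ] ≤ C) :
    cov[X, Y; μ] ≤ C := by
  have h := variance_sub hX hY
  have := variance_nonneg (X - Y) μ
  linarith

lemma variance_sum_le_of_indepFun [IsFiniteMeasure μ] {s : Finset ι} {X : ι → Ω → ℝ}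
    (R : ι → ι → Prop) [DecidableRel R] {C : ℝ} {K : ℕ}
    (hX : ∀ i ∈ s, MemLp (X i) 2 μ) (hvar : ∀ i ∈ s, Var[X i; μ] ≤ C)
    (hindep : ∀ i ∈ s, ∀ j ∈ s, R i j → IndepFun (X i) (X j) μ)
    (hK : ∀ i ∈ s, #{j ∈ s | ¬R i j} ≤ K) :
    Var[∑ i ∈ s, X i; μ] ≤ #s * (K * C) := by
  rw [variance_sum' hX, ← nsmul_eq_mul]
  refine sum_le_card_nsmul _ _ _ fun i hi => ?_
  have hC : 0 ≤ C := (variance_nonneg _ _).trans (hvar i hi)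
  rw [← sum_filter_add_sum_filter_not s (R i)]
  have hzero : ∑ j ∈ s with R i j, cov[X i, X j; μ] = 0 := sum_eq_zero fun j hj => by
    rw [mem_filter] at hj
    exact (hindep i hi j hj.1 hj.2).covariance_eq_zero (hX i hi) (hX j hj.1)
  calc ∑ j ∈ s with R i j, cov[X i, X j; μ] + ∑ j ∈ s with ¬R i j, cov[X i, X j; μ]
      ≤ #{j ∈ s | ¬R i j} • C := by
        rw [hzero, zero_add]
        refine sum_le_card_nsmul _ _ _ fun j hj => ?_
        have hj := (mem_filter.1 hj).1
        exact covariance_le_of_variance_le (hX i hi) (hX j hj) (hvar i hi) (hvar j hj)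
    _ ≤ K * C := by
        rw [nsmul_eq_mul]
        exact mul_le_mul_of_nonneg_right (by exact_mod_cast hK i hi) hC

lemma integral_sq_sum_sub_eq_variance [IsProbabilityMeasure μ] {s : Finset ι}
    {X : ι → Ω → ℝ} {m : ℝ} (hX : ∀ i ∈ s, MemLp (X i) 2 μ) (hm : ∀ i ∈ s, μ[X i] = m) :
    ∫ ω, (∑ i ∈ s, (X i ω - m)) ^ 2 ∂μ = Var[∑ i ∈ s, X i; μ] := by
  have hint : ∀ i ∈ s, Integrable (X i) μ := fun i hi => (hX i hi).integrable one_le_two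
  rw [variance_eq_integral (memLp_finsetSum' s hX).aemeasurable]
  simp only [Finset.sum_apply, integral_finsetSum s hint, sum_congr rfl hm, sum_sub_distrib,
    sum_const, nsmul_eq_mul]

end Variance

section Geometry

variable {Ω : Type*} {mΩ : MeasurableSpace Ω} {μ : Measure Ω}

def rectangle (a b c d : ℝ) : Set (EuclideanSpace ℝ (Fin 2)) :=
  {p | p 0 ∈ Set.Icc a b ∧ p 1 ∈ Set.Icc c d}

lemma measurableSet_rectangle (a b c d : ℝ) : MeasurableSet (rectangle a b c d) :=
  (measurableSet_Icc.preimage (by fun_prop)).inter (measurableSet_Icc.preimage (by fun_prop))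

lemma sub_le_dist_of_le_apply {ι : Type*} [Fintype ι] {p q : EuclideanSpace ℝ ι} {i : ι}
    {a b : ℝ} (hp : a ≤ p i) (hq : q i ≤ b) : a - b ≤ dist p q :=
  calc a - b ≤ |p i - q i| := le_abs.2 (Or.inl (by linarith))
    _ = dist (p i) (q i) := (Real.dist_eq _ _).symm
    _ ≤ dist p q := PiLp.dist_apply_le p q i

lemma ae_mem_of_map_eq_smul_restrict {β : Type*} [MeasurableSpace β] {X : Ω → β}
    {ν : Measure β} {S : Set β} {c : ENNReal} (hX : AEMeasurable X μ) (hS : MeasurableSet S)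
    (h : μ.map X = c • ν.restrict S) : ∀ᵐ ω ∂μ, X ω ∈ S :=
  ae_of_ae_map hX (h ▸ Measure.ae_smul_measure (ae_restrict_mem hS) c)

lemma ae_sub_le_dist_of_map_eq_restrict_rectangle {u s : ℕ → Ω → EuclideanSpace ℝ (Fin 2)}
    {a b c d a' b' c' d' : ℝ} {κ κ' : ENNReal}
    (hu : ∀ k, Measurable (u k)) (hs : ∀ i, Measurable (s i))
    (hlawu : ∀ k, μ.map (u k) = κ • volume.restrict (rectangle a b c d))
    (hlaws : ∀ i, μ.map (s i) = κ' • volume.restrict (rectangle a' b' c' d')) :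
    ∀ᵐ ω ∂μ, ∀ i k, a' - b ≤ dist (s i ω) (u k ω) := by
  simp only [ae_all_iff]
  intro i k
  filter_upwards [ae_mem_of_map_eq_smul_restrict (hs i).aemeasurable
      (measurableSet_rectangle _ _ _ _) (hlaws i),
    ae_mem_of_map_eq_smul_restrict (hu k).aemeasurable
      (measurableSet_rectangle _ _ _ _) (hlawu k)] with ω hsi huk
  exact sub_le_dist_of_le_apply hsi.1.1 huk.1.2

end Geometry

section IndependentPoints

variable {Ω E : Type*} {mΩ : MeasurableSpace Ω} {μ : Measure Ω} [MeasurableSpace E]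
  {u s : ℕ → Ω → E}

def quadruple (u s : ℕ → Ω → E) (i j k l : ℕ) (ω : Ω) : (E × E) × (E × E) :=
  ((s i ω, s j ω), (u k ω, u l ω))

lemma measurable_quadruple (hu : ∀ k, Measurable (u k)) (hs : ∀ i, Measurable (s i))
    (i j k l : ℕ) : Measurable (quadruple u s i j k l) :=
  ((hs i).prodMk (hs j)).prodMk ((hu k).prodMk (hu l))

lemma measurable_sumElim_apply (hu : ∀ k, Measurable (u k)) (hs : ∀ i, Measurable (s i)) :
    ∀ x, Measurable (Sum.elim u s x)
  | .inl k => hu k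
  | .inr i => hs i

lemma indepFun_quadruple (hindep : iIndepFun (Sum.elim u s) μ)
    (hu : ∀ k, Measurable (u k)) (hs : ∀ i, Measurable (s i)) {i j k l i' j' k' l' : ℕ}
    (hij : Disjoint (pairSet (i, j)) (pairSet (i', j')))
    (hkl : Disjoint (pairSet (k, l)) (pairSet (k', l'))) :
    IndepFun (quadruple u s i j k l) (quadruple u s i' j' k' l') μ := by
  have hST : Disjoint ((pairSet (k, l)).disjSum (pairSet (i, j)))
      ((pairSet (k', l')).disjSum (pairSet (i', j'))) := by
    simpa [disjoint_left] using ⟨fun a ha => disjoint_left.1 hkl ha,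
      fun a ha => disjoint_left.1 hij ha⟩
  let select : ∀ i j k l : ℕ, (((pairSet (k, l)).disjSum (pairSet (i, j)) : Set (ℕ ⊕ ℕ)) → E) →
      (E × E) × (E × E) := fun i j k l v =>
    ((v ⟨.inr i, by simp [pairSet]⟩, v ⟨.inr j, by simp [pairSet]⟩),
      (v ⟨.inl k, by simp [pairSet]⟩, v ⟨.inl l, by simp [pairSet]⟩))
  have hselect : ∀ i j k l, Measurable (select i j k l) := fun i j k l => by fun_prop
  exact (hindep.indepFun_finset _ _ hST (measurable_sumElim_apply hu hs)).comp
    (hselect i j k l) (hselect i' j' k' l')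

lemma map_quadruple (hindep : iIndepFun (Sum.elim u s) μ)
    (hu : ∀ k, Measurable (u k)) (hs : ∀ i, Measurable (s i)) {νT νR : Measure E}
    (hνT : ∀ k, μ.map (u k) = νT) (hνR : ∀ i, μ.map (s i) = νR) {i j k l : ℕ}
    (hij : i ≠ j) (hkl : k ≠ l) :
    μ.map (quadruple u s i j k l) = (νR.prod νR).prod (νT.prod νT) := by
  have := hindep.isProbabilityMeasure
  have hmeas := measurable_sumElim_apply hu hs
  have hsu : IndepFun (fun ω => (s i ω, s j ω)) (fun ω => (u k ω, u l ω)) μ :=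
    hindep.indepFun_prodMk_prodMk hmeas (.inr i) (.inr j) (.inl k) (.inl l)
      (by simp) (by simp) (by simp) (by simp)
  have hss : IndepFun (s i) (s j) μ := hindep.indepFun (i := .inr i) (j := .inr j) (by simpa)
  have huu : IndepFun (u k) (u l) μ := hindep.indepFun (i := .inl k) (j := .inl l) (by simpa)
  change μ.map (fun ω => ((s i ω, s j ω), (u k ω, u l ω))) = _
  rw [(indepFun_iff_map_prod_eq_prod_map_map ((hs i).prodMk (hs j)).aemeasurable
      ((hu k).prodMk (hu l)).aemeasurable).1 hsu,
    (indepFun_iff_map_prod_eq_prod_map_map (hs i).aemeasurable (hs j).aemeasurable).1 hss,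
    (indepFun_iff_map_prod_eq_prod_map_map (hu k).aemeasurable (hu l).aemeasurable).1 huu,
    hνT, hνT, hνR, hνR]

lemma identDistrib_quadruple (hindep : iIndepFun (Sum.elim u s) μ)
    (hu : ∀ k, Measurable (u k)) (hs : ∀ i, Measurable (s i)) {νT νR : Measure E}
    (hνT : ∀ k, μ.map (u k) = νT) (hνR : ∀ i, μ.map (s i) = νR) {i j k l i' j' k' l' : ℕ}
    (hij : i ≠ j) (hkl : k ≠ l) (hij' : i' ≠ j') (hkl' : k' ≠ l') :
    IdentDistrib (quadruple u s i j k l) (quadruple u s i' j' k' l') μ μ where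
  aemeasurable_fst := (measurable_quadruple hu hs i j k l).aemeasurable
  aemeasurable_snd := (measurable_quadruple hu hs i' j' k' l').aemeasurable
  map_eq := by
    rw [map_quadruple hindep hu hs hνT hνR hij hkl, map_quadruple hindep hu hs hνT hνR hij' hkl']

end IndependentPoints

section PhaseProduct

variable {Ω : Type*} {mΩ : MeasurableSpace Ω} {μ : Measure Ω} {L D lam : ℝ}
  {u s : ℕ → Ω → EuclideanSpace ℝ (Fin 2)}

local notation "E2" => EuclideanSpace ℝ (Fin 2)

def QOfPoints (L lam : ℝ) (z : (E2 × E2) × (E2 × E2)) : ℝ :=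
  (L / dist z.1.1 z.2.1) * (L / dist z.1.1 z.2.2) *
    (L / dist z.1.2 z.2.1) * (L / dist z.1.2 z.2.2) *
    Real.cos ((2 * Real.pi / lam) *
      (dist z.1.1 z.2.1 - dist z.1.1 z.2.2 - dist z.1.2 z.2.1 + dist z.1.2 z.2.2))

lemma Q_eq_comp (i j k l : ℕ) :
    Q L lam u s i j k l = QOfPoints L lam ∘ quadruple u s i j k l := rfl

lemma measurable_QOfPoints (L lam : ℝ) : Measurable (QOfPoints L lam) := by
  unfold QOfPoints; fun_prop

lemma abs_Q_le (hL : 0 ≤ L) (hLD : 0 < L - D) {ω : Ω}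
    (hsep : ∀ i k, L - D ≤ dist (s i ω) (u k ω)) (i j k l : ℕ) :
    |Q L lam u s i j k l ω| ≤ (L / (L - D)) ^ 4 := by
  have ha : ∀ i k, |L / dist (s i ω) (u k ω)| ≤ L / (L - D) := fun i k => by
    rw [abs_div, abs_of_nonneg hL, abs_of_nonneg dist_nonneg]
    exact div_le_div_of_nonneg_left hL hLD (hsep i k)
  calc |Q L lam u s i j k l ω|
      ≤ (L / (L - D)) * (L / (L - D)) * (L / (L - D)) * (L / (L - D)) * 1 := by
        simp only [Q, abs_mul]
        gcongr
        exacts [ha i k, ha i l, ha j k, ha j l, Real.abs_cos_le_one _]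
    _ = (L / (L - D)) ^ 4 := by ring

lemma measurable_Q (hu : ∀ k, Measurable (u k)) (hs : ∀ i, Measurable (s i)) (i j k l : ℕ) :
    Measurable (Q L lam u s i j k l) := by
  rw [Q_eq_comp]
  exact (measurable_QOfPoints L lam).comp (measurable_quadruple hu hs i j k l)

lemma memLp_Q [IsFiniteMeasure μ] (hu : ∀ k, Measurable (u k)) (hs : ∀ i, Measurable (s i))
    (hL : 0 ≤ L) (hLD : 0 < L - D) (hsep : ∀ᵐ ω ∂μ, ∀ i k, L - D ≤ dist (s i ω) (u k ω)) (i j k l : ℕ) :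
    MemLp (Q L lam u s i j k l) 2 μ :=
  MemLp.of_bound (measurable_Q hu hs i j k l).aestronglyMeasurable _
    (hsep.mono fun _ h => abs_Q_le hL hLD h i j k l)

lemma variance_Q_le [IsProbabilityMeasure μ] (hu : ∀ k, Measurable (u k))
    (hs : ∀ i, Measurable (s i)) (hL : 0 ≤ L) (hLD : 0 < L - D) (hsep : ∀ᵐ ω ∂μ, ∀ i k, L - D ≤ dist (s i ω) (u k ω)) (i j k l : ℕ) :
    Var[Q L lam u s i j k l; μ] ≤ (L / (L - D)) ^ 8 := by
  have h := variance_le_sq_of_bounded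
    (hsep.mono fun _ h => abs_le.1 (abs_Q_le (lam := lam) hL hLD h i j k l))
    (measurable_Q hu hs i j k l).aemeasurable
  convert h using 1
  ring

lemma indepFun_Q (hindep : iIndepFun (Sum.elim u s) μ) (hu : ∀ k, Measurable (u k))
    (hs : ∀ i, Measurable (s i)) {i j k l i' j' k' l' : ℕ}
    (hij : Disjoint (pairSet (i, j)) (pairSet (i', j')))
    (hkl : Disjoint (pairSet (k, l)) (pairSet (k', l'))) :
    IndepFun (Q L lam u s i j k l) (Q L lam u s i' j' k' l') μ := by
  rw [Q_eq_comp, Q_eq_comp]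
  exact (indepFun_quadruple hindep hu hs hij hkl).comp (measurable_QOfPoints L lam)
    (measurable_QOfPoints L lam)

lemma integral_Q_eq (hindep : iIndepFun (Sum.elim u s) μ)
    (hu : ∀ k, Measurable (u k)) (hs : ∀ i, Measurable (s i)) {νT νR : Measure E2}
    (hνT : ∀ k, μ.map (u k) = νT) (hνR : ∀ i, μ.map (s i) = νR) {i j k l i' j' k' l' : ℕ}
    (hij : i ≠ j) (hkl : k ≠ l) (hij' : i' ≠ j') (hkl' : k' ≠ l') :
    μ[Q L lam u s i j k l] = μ[Q L lam u s i' j' k' l'] := by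
  rw [Q_eq_comp, Q_eq_comp]
  exact ((identDistrib_quadruple hindep hu hs hνT hνR hij hkl hij' hkl').comp
    (measurable_QOfPoints L lam)).integral_eq

end PhaseProduct

theorem second_moment_centered_Q_sum_le_general
    (D L lam : ℝ) (hD : 0 < D) (hL : 2 * D ≤ L)
    (CT CR : Set (EuclideanSpace ℝ (Fin 2)))
    (hCT : CT = {p | p 0 ∈ Set.Icc 0 D ∧ p 1 ∈ Set.Icc 0 D})
    (hCR : CR = {p | p 0 ∈ Set.Icc L (L + D) ∧ p 1 ∈ Set.Icc 0 D})
    {Ω : Type*} [MeasurableSpace Ω] (μ : Measure Ω) [IsProbabilityMeasure μ]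
    (u s : ℕ → Ω → EuclideanSpace ℝ (Fin 2))
    (humeas : ∀ k, Measurable (u k)) (hsmeas : ∀ i, Measurable (s i))
    (hu : ∀ k, Measure.map (u k) μ = (volume CT)⁻¹ • volume.restrict CT)
    (hs : ∀ i, Measure.map (s i) μ = (volume CR)⁻¹ • volume.restrict CR)
    (hindep : ProbabilityTheory.iIndepFun
      (m := fun _ : ℕ ⊕ ℕ => (inferInstance : MeasurableSpace (EuclideanSpace ℝ (Fin 2))))
      (Sum.elim u s) μ)
    (w : ℕ) (hw : 2 ≤ w) :
    (∫ ω, (∑ i ∈ Finset.Icc 1 w, ∑ j ∈ Finset.Ioc i w,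
        ∑ k ∈ Finset.Icc 1 w, ∑ l ∈ Finset.Ioc k w,
          (Q L lam u s i j k l ω - ∫ ω', Q L lam u s 1 2 1 2 ω' ∂μ)) ^ 2 ∂μ) ≤
      2 * (L / (L - D)) ^ 8 * ((w : ℝ) ^ 2 * ((w : ℝ) - 1) ^ 2 / 4) *
        (((w : ℝ) ^ 2 * ((w : ℝ) - 1) ^ 2 -
          ((w : ℝ) - 2) ^ 2 * ((w : ℝ) - 3) ^ 2) / 4) := by
  have hLD : 0 < L - D := by linarith
  subst hCT hCR
  have hsep : ∀ᵐ ω ∂μ, ∀ i k, L - D ≤ dist (s i ω) (u k ω) :=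
    ae_sub_le_dist_of_map_eq_restrict_rectangle (b := D) (a' := L) humeas hsmeas hu hs
  set P := increasingPairs (Finset.Icc 1 w)
  have hX : ∀ t : (ℕ × ℕ) × (ℕ × ℕ), MemLp (Q L lam u s t.1.1 t.1.2 t.2.1 t.2.2) 2 μ :=
    fun t => memLp_Q humeas hsmeas (by linarith) hLD hsep _ _ _ _
  have hmean : ∀ t ∈ P ×ˢ P, μ[Q L lam u s t.1.1 t.1.2 t.2.1 t.2.2] = μ[Q L lam u s 1 2 1 2] :=
    fun t ht => by
      simp only [P, increasingPairs, mem_product, mem_filter] at ht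
      exact integral_Q_eq hindep humeas hsmeas hu hs ht.1.2.ne ht.2.2.ne (by norm_num) (by norm_num)
  simp only [sum_Icc_Ioc_sum_Icc_Ioc_eq_sum_product]
  rw [integral_sq_sum_sub_eq_variance (fun t _ => hX t) hmean]
  refine (variance_sum_le_of_indepFun (s := P ×ˢ P)
    (fun t t' => Disjoint (pairSet t.1) (pairSet t'.1) ∧ Disjoint (pairSet t.2) (pairSet t'.2))
    (fun t _ => hX t) (fun t _ => variance_Q_le humeas hsmeas (by linarith) hLD hsep _ _ _ _)
    (fun t _ t' _ h => indepFun_Q hindep humeas hsmeas h.1 h.2)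
    (fun t ht => card_filter_not_disjoint_pairSet_le _ ht)).trans ?_
  rw [card_product, card_increasingPairs, Nat.card_Icc, add_tsub_cancel_right]
  exact cast_choose_two_sq_mul_sub_le w hw (by positivity)

/-- **Second-moment bound for the centered sums of the `Q_{ijkl}`.**  For i.i.d.
uniform points `u_k` in `C_T = [0,D]²` and `s_i` in `C_R = [L,L+D] × [0,D]`, all
mutually independent, with `a_max = L/(L-D)`, for every integer `w ≥ 2`,
`E[(Σ_{1≤i<j≤w} Σ_{1≤k<l≤w} (Q_{ijkl} - E[Q_{1212}]))²]
  ≤ 2 a_max⁸ (w²(w-1)²/4) ((w²(w-1)² - (w-2)²(w-3)²)/4)`. -/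
theorem second_moment_centered_Q_sum_le
    (D L lam : ℝ) (hD : 0 < D) (hL : 2 * D ≤ L) (hlam : 0 < lam)
    (CT CR : Set (EuclideanSpace ℝ (Fin 2)))
    (hCT : CT = {p | p 0 ∈ Set.Icc 0 D ∧ p 1 ∈ Set.Icc 0 D})
    (hCR : CR = {p | p 0 ∈ Set.Icc L (L + D) ∧ p 1 ∈ Set.Icc 0 D})
    {Ω : Type*} [MeasurableSpace Ω] (μ : Measure Ω) [IsProbabilityMeasure μ]
    (u s : ℕ → Ω → EuclideanSpace ℝ (Fin 2))
    (humeas : ∀ k, Measurable (u k)) (hsmeas : ∀ i, Measurable (s i))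
    (hu : ∀ k, Measure.map (u k) μ = (volume CT)⁻¹ • volume.restrict CT)
    (hs : ∀ i, Measure.map (s i) μ = (volume CR)⁻¹ • volume.restrict CR)
    (hindep : ProbabilityTheory.iIndepFun
      (m := fun _ : ℕ ⊕ ℕ => (inferInstance : MeasurableSpace (EuclideanSpace ℝ (Fin 2))))
      (Sum.elim u s) μ)
    (w : ℕ) (hw : 2 ≤ w) :
    (∫ ω, (∑ i ∈ Finset.Icc 1 w, ∑ j ∈ Finset.Ioc i w,
        ∑ k ∈ Finset.Icc 1 w, ∑ l ∈ Finset.Ioc k w,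
          (Q L lam u s i j k l ω - ∫ ω', Q L lam u s 1 2 1 2 ω' ∂μ)) ^ 2 ∂μ) ≤
      2 * (L / (L - D)) ^ 8 * ((w : ℝ) ^ 2 * ((w : ℝ) - 1) ^ 2 / 4) *
        (((w : ℝ) ^ 2 * ((w : ℝ) - 1) ^ 2 -
          ((w : ℝ) - 2) ^ 2 * ((w : ℝ) - 3) ^ 2) / 4) :=
  second_moment_centered_Q_sum_le_general D L lam hD hL CT CR hCT hCR μ u s humeas hsmeas hu hs
    hindep w hw
end
end

section
/- Fix an integer h' ≥ 1 and define real sequences (α_k) and (β_k) for integers k ≥ h'−1 by the initial conditions α_{h'−1} = h'/(h'+1), β_{h'−1} = 0, and the recursions α_k = (α_{k−1} + 1) / (2(2 − α_{k−1})) and β_k = (1 − α_{k−1} + 2β_{k−1}) / (2(2 − α_{k−1})) for k ≥ h'. Then the recursions are well defined (the denominators never vanish) and for all integers k ≥ h'−1 the closed forms hold: α_k = (3^{1+k−h'} + 2^{1+k−h'}(h'−1)) / (2·3^{1+k−h'} + 2^{1+k−h'}(h'−1)) and β_k = (3^{1+k−h'} − 2^{1+k−h'}) / (2·3^{1+k−h'}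 + 2^{1+k−h'}(h'−1)). -/
/-- Closed forms for the throughput exponents `α` and `β` of the modified
hierarchical cooperation scheme, defined by `α (h'-1) = h'/(h'+1)`, `β (h'-1) = 0`,
`α k = (α (k-1) + 1) / (2 (2 - α (k-1)))` and
`β k = (1 - α (k-1) + 2 β (k-1)) / (2 (2 - α (k-1)))` for `k ≥ h'`.  The denominators
never vanish and
`α k = (3^{1+k-h'} + 2^{1+k-h'}(h'-1)) / (2·3^{1+k-h'} + 2^{1+k-h'}(h'-1))`,
`β k = (3^{1+k-h'} - 2^{1+k-h'}) / (2·3^{1+k-h'} + 2^{1+k-h'}(h'-1))`. -/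
theorem alpha_beta_closed_form
    (h' : ℕ) (hh' : 1 ≤ h') (α β : ℕ → ℝ)
    (hα0 : α (h' - 1) = (h' : ℝ) / (h' + 1))
    (hβ0 : β (h' - 1) = 0)
    (hαrec : ∀ k, h' ≤ k → α k = (α (k - 1) + 1) / (2 * (2 - α (k - 1))))
    (hβrec : ∀ k, h' ≤ k → β k = (1 - α (k - 1) + 2 * β (k - 1)) / (2 * (2 - α (k - 1)))) :
    ∀ k, h' - 1 ≤ k →
      2 - α k ≠ 0 ∧
      α k = ((3 : ℝ) ^ (1 + k - h') + 2 ^ (1 + k - h') * (h' - 1)) /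
              (2 * 3 ^ (1 + k - h') + 2 ^ (1 + k - h') * (h' - 1)) ∧
      β k = ((3 : ℝ) ^ (1 + k - h') - 2 ^ (1 + k - h')) /
              (2 * 3 ^ (1 + k - h') + 2 ^ (1 + k - h') * (h' - 1)) := by
  obtain ⟨h, rfl⟩ : ∃ h, h' = h + 1 := ⟨h' - 1, (Nat.succ_pred_eq_of_pos hh').symm⟩
  simp only [Nat.add_sub_cancel] at hα0 hβ0 ⊢
  have hcast : (0:ℝ) ≤ (h:ℝ) := Nat.cast_nonneg h
  have hne2 : ∀ n : ℕ, 2 - ((3:ℝ)^n + 2^n * h) / (2 * 3^n + 2^n * h) ≠ 0 := by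
    intro n
    have h3 : (0:ℝ) < 3^n := by positivity
    have h2 : (0:ℝ) < 2^n := by positivity
    have hD : (0:ℝ) < 2 * 3^n + 2^n * h := by positivity
    rw [sub_ne_zero]
    intro hc
    rw [eq_comm, div_eq_iff hD.ne'] at hc
    nlinarith [mul_nonneg h2.le hcast]
  have key : ∀ n : ℕ,
      2 - α (h + n) ≠ 0 ∧
      α (h + n) = ((3 : ℝ) ^ n + 2 ^ n * h) / (2 * 3 ^ n + 2 ^ n * h) ∧
      β (h + n) = ((3 : ℝ) ^ n - 2 ^ n) / (2 * 3 ^ n + 2 ^ n * h) := by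
    intro n
    induction n with
    | zero =>
      have hα : α (h + 0) = ((3 : ℝ) ^ 0 + 2 ^ 0 * h) / (2 * 3 ^ 0 + 2 ^ 0 * h) := by
        simpa using hα0.trans (by push_cast; ring_nf)
      exact ⟨hα ▸ hne2 0, hα, by simpa using hβ0⟩
    | succ n ih =>
      obtain ⟨hne, hαn, hβn⟩ := ih
      have hD : (0:ℝ) < 2 * 3 ^ n + 2 ^ n * h := by positivity
      have hD' : (0:ℝ) < 2 * 3 ^ (n+1) + 2 ^ (n+1) * h := by positivity
      have hk : h + 1 ≤ h + (n + 1) := by omega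
      have hkp : h + (n + 1) - 1 = h + n := by omega
      have hsub : 2 - α (h + n) =
          (2 * 3 ^ (n+1) + 2 ^ (n+1) * (h:ℝ)) / (2 * (2 * 3 ^ n + 2 ^ n * h)) := by
        rw [hαn]
        field_simp
        ring
      have hα : α (h + (n+1)) =
          ((3 : ℝ) ^ (n+1) + 2 ^ (n+1) * h) / (2 * 3 ^ (n+1) + 2 ^ (n+1) * h) := by
        rw [hαrec _ hk, hkp, hsub, hαn]
        rw [div_eq_div_iff (by positivity) hD'.ne']
        field_simp
        ring
      have hβ : β (h + (n+1)) =
          ((3 : ℝ) ^ (n+1) - 2 ^ (n+1)) / (2 * 3 ^ (n+1) + 2 ^ (n+1) * h) := by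
        rw [hβrec _ hk, hkp, hsub, hαn, hβn]
        rw [div_eq_div_iff (by positivity) hD'.ne']
        field_simp
        ring
      exact ⟨hα ▸ hne2 (n+1), hα, hβ⟩
  intro k hk
  obtain ⟨n, rfl⟩ : ∃ n, k = h + n := ⟨k - h, by omega⟩
  have he : 1 + (h + n) - (h + 1) = n := by omega
  rw [he]
  push_cast
  simp only [add_sub_cancel_right]
  exact key n
end
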